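/- arXiv:math/0504480 — 4 statements merged into one kernel-verified Lean document; each statement's English description precedes it below -/
import Mathlib

section
/- Let 0 < q₁ < q₂ and f : [0,∞) → (0,∞). If D^{(q)}(r + log 2 | q₁) ∼ f(r) and D^{(q)}(r | q₂) ∼ f(r) as r → ∞, then for every ε > 0, lim_{r→∞} sup_{C ⊂ Ê, |C| ≤ e^r} ℙ( d(X,C) ≤ (1−ε) f(r) ) = 0. -/
open MeasureTheory ProbabilityTheory Filter Set Topology
open scoped ENNReal NNReal

noncomputable section

/-- The entropy `ℍ(Y) = −Σ_w ℙ(Y = w) log ℙ(Y = w)` of a discrete random variable. -/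
def entropy {Ω α : Type*} [MeasurableSpace Ω] (P : Measure Ω) (Y : Ω → α) : ℝ≥0∞ :=
  ∑' w : α, ENNReal.ofReal (Real.negMulLog (P {ω | Y ω = w}).toReal)

variable {Ω E F : Type*} [MeasurableSpace Ω] [MeasurableSpace E] [MeasurableSpace F]

/-- `d(x, C) = inf_{y ∈ C} d(x, y)`, the distance of `x` to a codebook `C`. -/
def dSet (d : E → F → ℝ) (x : E) (C : Finset F) : ℝ≥0∞ :=
  ⨅ y ∈ C, ENNReal.ofReal (d x y)

/-- The quantization error `D^{(q)}(r|q)`: the infimum of `𝔼[d(X,C)^q]^{1/q}` over all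
codebooks `C ⊂ F` with at most `e^r` elements. -/
def Dquant (P : Measure Ω) (d : E → F → ℝ) (X : Ω → E) (r q : ℝ) : ℝ≥0∞ :=
  ⨅ (C : Finset F) (_ : (C.card : ℝ) ≤ Real.exp r),
    (∫⁻ ω, (dSet d (X ω) C) ^ q ∂P) ^ (1/q)

/-- The entropy coding error `D^{(e)}(r|q)`: the infimum of `𝔼[d(X,X̂)^q]^{1/q}` over all
discrete `F`-valued random variables `X̂` with entropy `ℍ(X̂) ≤ r`. -/
def Dent (P : Measure Ω) (d : E → F → ℝ) (X : Ω → E) (r q : ℝ) : ℝ≥0∞ :=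
  ⨅ (Y : Ω → F) (_ : (Set.range Y).Countable ∧ (∀ w, MeasurableSet {ω | Y ω = w}) ∧
      entropy P Y ≤ ENNReal.ofReal r),
    (∫⁻ ω, (ENNReal.ofReal (d (X ω) (Y ω))) ^ q ∂P) ^ (1/q)

end

/-!
Given a codebook `C` with at most `e^r` points, merge it with an almost optimal codebook `C'`
for the `q₂`-th moment; `C ∪ C'` has at most `e^(r + log 2)` points. Normalise
`V = d(X, C ∪ C') / f(r)`. Young's inequality `v^q₁ ≤ (1 - q₁/q₂) + (q₁/q₂) v^q₂` holds with slack
at least `momentGap q₁ q₂ a > 0` wherever `v ≤ a < 1`, so integrating gives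
`𝔼 V^q₁ + momentGap q₁ q₂ a · ℙ(V ≤ a) ≤ (1 - q₁/q₂) + (q₁/q₂) 𝔼 V^q₂`.
The two hypotheses force `𝔼 V^q₁ ≥ 1 - o(1)` and `𝔼 V^q₂ ≤ 1 + o(1)`, so `ℙ(V ≤ a)`, which
dominates `ℙ(d(X, C) ≤ a f(r))`, tends to `0` uniformly in `C`.
-/

noncomputable def momentGap (q₁ q₂ x : ℝ) : ℝ := 1 - q₁ / q₂ + q₁ / q₂ * x ^ q₂ - x ^ q₁

variable {Ω E F : Type*} [MeasurableSpace Ω]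

section MomentGap

variable {q₁ q₂ : ℝ}

lemma rpow_eq_rpow_rpow_div (hq₂ : q₂ ≠ 0) {x : ℝ} (hx : 0 ≤ x) :
    x ^ q₁ = (x ^ q₂) ^ (q₁ / q₂) := by
  rw [← Real.rpow_mul hx, mul_div_cancel₀ _ hq₂]

lemma momentGap_nonneg (hq₁ : 0 < q₁) (hq₁₂ : q₁ ≤ q₂) {x : ℝ} (hx : 0 ≤ x) :
    0 ≤ momentGap q₁ q₂ x := by
  have hq₂ : 0 < q₂ := hq₁.trans_le hq₁₂
  have := rpow_one_add_le_one_add_mul_self (s := x ^ q₂ - 1) (by linarith [Real.rpow_nonneg hx q₂])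
    (div_pos hq₁ hq₂).le ((div_le_one hq₂).2 hq₁₂)
  rw [add_sub_cancel, ← rpow_eq_rpow_rpow_div hq₂.ne' hx] at this
  unfold momentGap
  linarith

lemma momentGap_pos (hq₁ : 0 < q₁) (hq₁₂ : q₁ < q₂) {x : ℝ} (hx : 0 ≤ x) (hx1 : x ≠ 1) :
    0 < momentGap q₁ q₂ x := by
  have hq₂ : 0 < q₂ := hq₁.trans hq₁₂
  have hxq₂ : x ^ q₂ ≠ 1 := by
    rwa [Ne, ← Real.one_rpow q₂, Real.rpow_left_inj hx zero_le_one hq₂.ne']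
  have := rpow_one_add_lt_one_add_mul_self (s := x ^ q₂ - 1) (by linarith [Real.rpow_nonneg hx q₂])
    (sub_ne_zero.2 hxq₂) (div_pos hq₁ hq₂) ((div_lt_one hq₂).2 hq₁₂)
  rw [add_sub_cancel, ← rpow_eq_rpow_rpow_div hq₂.ne' hx] at this
  unfold momentGap
  linarith

lemma momentGap_antitoneOn (hq₁ : 0 < q₁) (hq₁₂ : q₁ ≤ q₂) :
    AntitoneOn (momentGap q₁ q₂) (Icc 0 1) := by
  rintro x ⟨hx0, -⟩ a ⟨ha0, ha1⟩ hxa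
  rcases ha0.eq_or_lt with rfl | ha0
  · rw [le_antisymm hxa hx0]
  have hq₂ : 0 < q₂ := hq₁.trans_le hq₁₂
  obtain ⟨s, hs0, hs1, rfl⟩ : ∃ s, 0 ≤ s ∧ s ≤ 1 ∧ x = a * s :=
    ⟨x / a, div_nonneg hx0 ha0.le, (div_le_one ha0).2 hxa, by field_simp⟩
  have hs := momentGap_nonneg hq₁ hq₁₂ hs0
  have haq : a ^ q₂ ≤ a ^ q₁ := Real.rpow_le_rpow_of_exponent_ge ha0 ha1 hq₁₂
  have hsq₂ : s ^ q₂ ≤ 1 := Real.rpow_le_one hs0 hs1 hq₂.le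
  have ht : 0 ≤ q₁ / q₂ := (div_pos hq₁ hq₂).le
  unfold momentGap at hs ⊢
  rw [Real.mul_rpow ha0.le hs0, Real.mul_rpow ha0.le hs0]
  nlinarith [mul_le_mul_of_nonneg_right haq (mul_nonneg ht (sub_nonneg.2 hsq₂)),
    mul_le_mul_of_nonneg_left hs (Real.rpow_nonneg ha0.le q₁)]

lemma ofReal_rpow_add_ofReal_momentGap (hq₁ : 0 < q₁) (hq₁₂ : q₁ ≤ q₂) {x : ℝ} (hx : 0 ≤ x) :
    ENNReal.ofReal x ^ q₁ + ENNReal.ofReal (momentGap q₁ q₂ x) =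
      ENNReal.ofReal (1 - q₁ / q₂) + ENNReal.ofReal (q₁ / q₂) * ENNReal.ofReal x ^ q₂ := by
  have hq₂ : 0 < q₂ := hq₁.trans_le hq₁₂
  rw [ENNReal.ofReal_rpow_of_nonneg hx hq₁.le, ENNReal.ofReal_rpow_of_nonneg hx hq₂.le,
    ← ENNReal.ofReal_add (by positivity) (momentGap_nonneg hq₁ hq₁₂ hx),
    ← ENNReal.ofReal_mul (div_pos hq₁ hq₂).le,
    ← ENNReal.ofReal_add (sub_nonneg.2 ((div_le_one hq₂).2 hq₁₂)) (by positivity)]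
  congr 1
  unfold momentGap
  ring

lemma rpow_add_ite_momentGap_le (hq₁ : 0 < q₁) (hq₁₂ : q₁ ≤ q₂) {a : ℝ} (ha : a ∈ Icc 0 1)
    (v : ℝ≥0∞) :
    v ^ q₁ + (if v ≤ ENNReal.ofReal a then ENNReal.ofReal (momentGap q₁ q₂ a) else 0) ≤
      ENNReal.ofReal (1 - q₁ / q₂) + ENNReal.ofReal (q₁ / q₂) * v ^ q₂ := by
  have hq₂ : 0 < q₂ := hq₁.trans_le hq₁₂
  rcases eq_or_ne v ⊤ with rfl | hv
  · simp [ENNReal.top_rpow_of_pos hq₂, div_pos hq₁ hq₂]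
  obtain ⟨x, hx, rfl⟩ : ∃ x, 0 ≤ x ∧ ENNReal.ofReal x = v :=
    ⟨v.toReal, ENNReal.toReal_nonneg, ENNReal.ofReal_toReal hv⟩
  rw [← ofReal_rpow_add_ofReal_momentGap hq₁ hq₁₂ hx]
  gcongr
  split_ifs with hxa
  · rw [ENNReal.ofReal_le_ofReal_iff ha.1] at hxa
    exact ENNReal.ofReal_le_ofReal
      (momentGap_antitoneOn hq₁ hq₁₂ ⟨hx, hxa.trans ha.2⟩ ha hxa)
  · exact zero_le

lemma lintegral_rpow_add_momentGap_mul_measure_le {P : Measure Ω} [IsProbabilityMeasure P]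
    (hq₁ : 0 < q₁) (hq₁₂ : q₁ ≤ q₂) {a : ℝ} (ha : a ∈ Icc 0 1) {V : Ω → ℝ≥0∞}
    (hV : Measurable V) :
    ∫⁻ ω, V ω ^ q₁ ∂P + ENNReal.ofReal (momentGap q₁ q₂ a) * P {ω | V ω ≤ ENNReal.ofReal a} ≤
      ENNReal.ofReal (1 - q₁ / q₂) + ENNReal.ofReal (q₁ / q₂) * ∫⁻ ω, V ω ^ q₂ ∂P := by
  calc _ = ∫⁻ ω, (V ω ^ q₁ + {ω | V ω ≤ ENNReal.ofReal a}.indicator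
          (fun _ => ENNReal.ofReal (momentGap q₁ q₂ a)) ω) ∂P := by
        rw [lintegral_add_left (hV.pow_const q₁),
          lintegral_indicator_const (measurableSet_le hV measurable_const)]
    _ ≤ ∫⁻ ω, (ENNReal.ofReal (1 - q₁ / q₂) + ENNReal.ofReal (q₁ / q₂) * V ω ^ q₂) ∂P :=
        lintegral_mono fun ω => by
          simpa only [indicator_apply, mem_ofPred_eq] using
            rpow_add_ite_momentGap_le hq₁ hq₁₂ ha (V ω)
    _ = _ := by
        rw [lintegral_add_left measurable_const, lintegral_const, measure_univ, mul_one,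
          lintegral_const_mul' _ _ ENNReal.ofReal_ne_top]

lemma tendsto_young_sub_rpow_zero {α : Type*} {L : Filter α} (hq₁ : 0 < q₁) (hq₁₂ : q₁ ≤ q₂)
    {u v : α → ℝ≥0∞} (hu : Tendsto u L (𝓝 1)) (hv : Tendsto v L (𝓝 1)) :
    Tendsto (fun x => ENNReal.ofReal (1 - q₁ / q₂) + ENNReal.ofReal (q₁ / q₂) * u x ^ q₂ -
      v x ^ q₁) L (𝓝 0) := by
  have hq₂ : 0 < q₂ := hq₁.trans_le hq₁₂
  have hlim : ENNReal.ofReal (1 - q₁ / q₂) + ENNReal.ofReal (q₁ / q₂) * 1 ^ q₂ - 1 ^ q₁ = 0 := by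
    rw [ENNReal.one_rpow, ENNReal.one_rpow, mul_one,
      ← ENNReal.ofReal_add (sub_nonneg.2 ((div_le_one hq₂).2 hq₁₂)) (div_pos hq₁ hq₂).le,
      sub_add_cancel, ENNReal.ofReal_one, tsub_self]
  rw [← hlim]
  exact ENNReal.Tendsto.sub (tendsto_const_nhds.add
    (ENNReal.Tendsto.const_mul (hu.ennrpow_const q₂) (.inr ENNReal.ofReal_ne_top)))
    (hv.ennrpow_const q₁) (.inr (by simp))

end MomentGap

lemma lintegral_div_rpow (μ : Measure Ω) (W : Ω → ℝ≥0∞) {g : ℝ≥0∞} (hg0 : g ≠ 0) (hg : g ≠ ⊤)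
    {q : ℝ} (hq : 0 < q) :
    ∫⁻ ω, (W ω / g) ^ q ∂μ = ((∫⁻ ω, W ω ^ q ∂μ) ^ (1 / q) / g) ^ q := by
  simp_rw [ENNReal.div_rpow_of_nonneg _ _ hq.le, div_eq_mul_inv]
  have hgq : g ^ q ≠ 0 := (ENNReal.rpow_pos (pos_iff_ne_zero.2 hg0) hg).ne'
  rw [lintegral_mul_const' _ _ (ENNReal.inv_ne_top.2 hgq), one_mul,
    ← ENNReal.rpow_mul, inv_mul_cancel₀ hq.ne', ENNReal.rpow_one]

lemma dSet_antitone (d : E → F → ℝ) (x : E) : Antitone (dSet d x) :=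
  fun _ _ h => biInf_mono fun _ hy => h hy

lemma measurable_dSet [MeasurableSpace E] [MeasurableSpace F] {d : E → F → ℝ}
    (hd : Measurable fun x : E × F => d x.1 x.2) {X : Ω → E} (hX : Measurable X)
    (C : Finset F) : Measurable fun ω => dSet d (X ω) C := by
  simp only [dSet, iInf_subtype']
  exact .iInf fun y => ENNReal.measurable_ofReal.comp (hd.comp (hX.prodMk measurable_const))

lemma Dquant_le_of_card_le (P : Measure Ω) (d : E → F → ℝ) (X : Ω → E) {r : ℝ} (q : ℝ)
    {C : Finset F} (hC : (C.card : ℝ) ≤ Real.exp r) :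
    Dquant P d X r q ≤ (∫⁻ ω, dSet d (X ω) C ^ q ∂P) ^ (1 / q) :=
  iInf₂_le C hC

lemma le_map_Dquant {P : Measure Ω} {d : E → F → ℝ} {X : Ω → E} {r q : ℝ}
    {φ : ℝ≥0∞ → ℝ≥0∞} (hφ : Monotone φ) (hφc : Continuous φ) (hφtop : φ ⊤ = ⊤) {b : ℝ≥0∞}
    (h : ∀ C : Finset F, (C.card : ℝ) ≤ Real.exp r →
      b ≤ φ ((∫⁻ ω, dSet d (X ω) C ^ q ∂P) ^ (1 / q))) :
    b ≤ φ (Dquant P d X r q) := by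
  rw [Dquant, hφ.map_iInf_of_continuousAt hφc.continuousAt hφtop]
  refine le_iInf fun C => ?_
  rw [Function.comp_apply, hφ.map_iInf_of_continuousAt hφc.continuousAt hφtop]
  exact le_iInf (h C)

lemma card_union_le_exp_add_log_two [DecidableEq F] {C C' : Finset F} {r : ℝ}
    (hC : (C.card : ℝ) ≤ Real.exp r) (hC' : (C'.card : ℝ) ≤ Real.exp r) :
    ((C ∪ C').card : ℝ) ≤ Real.exp (r + Real.log 2) := by
  rw [Real.exp_add, Real.exp_log two_pos]
  have : ((C ∪ C').card : ℝ) ≤ C.card + C'.card := by exact_mod_cast C.card_union_le C'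
  linarith

section Concentration

variable {P : Measure Ω} [IsProbabilityMeasure P] [MeasurableSpace E] [MeasurableSpace F]
  {d : E → F → ℝ} {X : Ω → E} {q₁ q₂ : ℝ}

lemma rpow_Dquant_div_add_momentGap_mul_measure_le (hd : Measurable fun x : E × F => d x.1 x.2)
    (hX : Measurable X) (hq₁ : 0 < q₁) (hq₁₂ : q₁ ≤ q₂) {a : ℝ} (ha : a ∈ Icc 0 1)
    {g : ℝ≥0∞} (hg0 : g ≠ 0) (hg : g ≠ ⊤) {r : ℝ} {C : Finset F}
    (hC : (C.card : ℝ) ≤ Real.exp r) :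
    (Dquant P d X (r + Real.log 2) q₁ / g) ^ q₁ +
        ENNReal.ofReal (momentGap q₁ q₂ a) * P {ω | dSet d (X ω) C ≤ ENNReal.ofReal a * g} ≤
      ENNReal.ofReal (1 - q₁ / q₂) + ENNReal.ofReal (q₁ / q₂) * (Dquant P d X r q₂ / g) ^ q₂ := by
  classical
  have hq₂ : 0 < q₂ := hq₁.trans_le hq₁₂
  refine le_map_Dquant (φ := fun x => ENNReal.ofReal (1 - q₁ / q₂) +
      ENNReal.ofReal (q₁ / q₂) * (x / g) ^ q₂) (fun x y hxy => by dsimp only; gcongr)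
    (continuous_const.add ((ENNReal.continuous_const_mul ENNReal.ofReal_ne_top).comp
      (ENNReal.continuous_rpow_const.comp (ENNReal.continuous_div_const g hg0))))
    (by simp [ENNReal.top_div_of_ne_top hg, ENNReal.top_rpow_of_pos hq₂, div_pos hq₁ hq₂])
    fun C' hC' => ?_
  set W := fun ω => dSet d (X ω) (C ∪ C')
  calc _ ≤ ∫⁻ ω, (W ω / g) ^ q₁ ∂P +
          ENNReal.ofReal (momentGap q₁ q₂ a) * P {ω | W ω / g ≤ ENNReal.ofReal a} := by
        gcongr ?_ + _ * P ?_
        · rw [lintegral_div_rpow P W hg0 hg hq₁]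
          gcongr
          exact Dquant_le_of_card_le P d X q₁ (card_union_le_exp_add_log_two hC hC')
        · intro ω hω
          exact (ENNReal.div_le_iff hg0 hg).2
            ((dSet_antitone d (X ω) Finset.subset_union_left).trans hω)
    _ ≤ ENNReal.ofReal (1 - q₁ / q₂) + ENNReal.ofReal (q₁ / q₂) * ∫⁻ ω, (W ω / g) ^ q₂ ∂P :=
        lintegral_rpow_add_momentGap_mul_measure_le hq₁ hq₁₂ ha
          ((measurable_dSet hd hX _).div_const g)
    _ ≤ _ := by
        rw [← lintegral_div_rpow P _ hg0 hg hq₂]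
        gcongr with ω
        exact dSet_antitone d (X ω) Finset.subset_union_right

theorem tendsto_iSup_measure_dSet_le (hd : Measurable fun x : E × F => d x.1 x.2)
    (hX : Measurable X) {f : ℝ → ℝ} (hf : ∀ᶠ r in atTop, 0 < f r) (hq₁ : 0 < q₁)
    (hq₁₂ : q₁ < q₂)
    (h1 : Tendsto (fun r : ℝ => Dquant P d X (r + Real.log 2) q₁ / ENNReal.ofReal (f r))
      atTop (𝓝 1))
    (h2 : Tendsto (fun r : ℝ => Dquant P d X r q₂ / ENNReal.ofReal (f r)) atTop (𝓝 1))
    {a : ℝ} (ha0 : 0 ≤ a) (ha1 : a < 1) :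
    Tendsto (fun r : ℝ => ⨆ (C : Finset F) (_ : (C.card : ℝ) ≤ Real.exp r),
        P {ω | dSet d (X ω) C ≤ ENNReal.ofReal (a * f r)}) atTop (𝓝 0) := by
  set c := ENNReal.ofReal (momentGap q₁ q₂ a)
  have hc : c ≠ 0 := (ENNReal.ofReal_pos.2 (momentGap_pos hq₁ hq₁₂ ha0 ha1.ne)).ne'
  have hbound := ENNReal.Tendsto.div_const
    (tendsto_young_sub_rpow_zero hq₁ hq₁₂.le h2 h1) (.inr hc)
  rw [ENNReal.zero_div] at hbound
  refine tendsto_of_tendsto_of_tendsto_of_le_of_le' tendsto_const_nhds hbound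
    (.of_forall fun _ => zero_le) ?_
  filter_upwards [hf, h1.eventually_ne ENNReal.one_ne_top] with r hr hr1
  refine iSup₂_le fun C hC => ?_
  rw [ENNReal.le_div_iff_mul_le (.inl hc) (.inl ENNReal.ofReal_ne_top), mul_comm,
    ENNReal.ofReal_mul ha0]
  exact ENNReal.le_sub_of_add_le_left (ENNReal.rpow_ne_top_of_nonneg hq₁.le hr1)
    (rpow_Dquant_div_add_momentGap_mul_measure_le hd hX hq₁ hq₁₂.le ⟨ha0, ha1.le⟩
      (ENNReal.ofReal_pos.2 hr).ne' ENNReal.ofReal_ne_top hC)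

end Concentration

theorem quantization_concentration_of_moment_equivalence_general
    {Ω E F : Type*} [MeasurableSpace Ω] [MeasurableSpace E] [MeasurableSpace F]
    (P : Measure Ω) [IsProbabilityMeasure P]
    (d : E → F → ℝ) (hd : Measurable fun x : E × F => d x.1 x.2)
    (X : Ω → E) (hX : Measurable X)
    (f : ℝ → ℝ) (hfpos : ∀ r, 0 ≤ r → 0 < f r)
    (q₁ q₂ : ℝ) (hq₁ : 0 < q₁) (hq₁₂ : q₁ < q₂)
    (h1 : Tendsto (fun r : ℝ => Dquant P d X (r + Real.log 2) q₁ / ENNReal.ofReal (f r))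
      atTop (𝓝 1))
    (h2 : Tendsto (fun r : ℝ => Dquant P d X r q₂ / ENNReal.ofReal (f r)) atTop (𝓝 1)) :
    ∀ ε : ℝ, 0 < ε →
      Tendsto (fun r : ℝ =>
          ⨆ (C : Finset F) (_ : (C.card : ℝ) ≤ Real.exp r),
            P {ω | dSet d (X ω) C ≤ ENNReal.ofReal ((1 - ε) * f r)})
        atTop (𝓝 0) := by
  intro ε hε
  have hf : ∀ᶠ r in atTop, 0 < f r := eventually_atTop.2 ⟨0, hfpos⟩
  refine tendsto_of_tendsto_of_tendsto_of_le_of_le' tendsto_const_nhds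
    (tendsto_iSup_measure_dSet_le hd hX hf hq₁ hq₁₂ h1 h2 (le_max_right (1 - ε) 0)
      (max_lt (by linarith) one_pos)) (.of_forall fun _ => zero_le) ?_
  filter_upwards [hf] with r hr
  gcongr
  exact le_max_left _ _

/-- **Lemma 5.3.** Let `0 < q₁ < q₂` and `f : [0,∞) → ℝ₊`. If
`D^{(q)}(r + log 2|q₁) ∼ f(r)` and `D^{(q)}(r|q₂) ∼ f(r)`, then for any `ε > 0`,
`lim_{r→∞} sup_{C ⊂ F, |C| ≤ e^r} ℙ(d(X,C) ≤ (1−ε) f(r)) = 0`. -/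
theorem quantization_concentration_of_moment_equivalence
    {Ω E F : Type*} [MeasurableSpace Ω] [MeasurableSpace E] [MeasurableSpace F]
    (P : Measure Ω) [IsProbabilityMeasure P]
    (d : E → F → ℝ) (hd : Measurable fun x : E × F => d x.1 x.2)
    (hd0 : ∀ x y, 0 ≤ d x y) (X : Ω → E) (hX : Measurable X)
    (f : ℝ → ℝ) (hfpos : ∀ r, 0 ≤ r → 0 < f r)
    (q₁ q₂ : ℝ) (hq₁ : 0 < q₁) (hq₁₂ : q₁ < q₂)
    (h1 : Tendsto (fun r : ℝ => Dquant P d X (r + Real.log 2) q₁ / ENNReal.ofReal (f r))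
      atTop (𝓝 1))
    (h2 : Tendsto (fun r : ℝ => Dquant P d X r q₂ / ENNReal.ofReal (f r)) atTop (𝓝 1)) :
    ∀ ε : ℝ, 0 < ε →
      Tendsto (fun r : ℝ =>
          ⨆ (C : Finset F) (_ : (C.card : ℝ) ≤ Real.exp r),
            P {ω | dSet d (X ω) C ≤ ENNReal.ofReal ((1 - ε) * f r)})
        atTop (𝓝 0) :=
  quantization_concentration_of_moment_equivalence_general P d hd X hX f hfpos q₁ q₂ hq₁ hq₁₂ h1 h2
end

section
/- Let (Z_i)_{i∈ℕ} be an ergodic stationary sequence of real-valued random variables and let S_n = Σ_{i=1}^n Z_i, with S_1^n = (S_1,…,S_n) ∈ ℝ^n. Let ε > 0 and assume 𝔼[log(|Z_1|/(2ε) + 2)] < ∞. Then there exist a universal constant c < ∞ (not depending on (Z_i) or ε) and finite codebooks 𝒞_n ⊂ ℝ^n of size at most exp{2n·𝔼[log(|Z_1|/(2ε) + 2)] + nc} such that lim_{n→∞} ℙ( min_{ŝ ∈ 𝒞_n} ‖S_1^n − ŝ‖_{ℓ_∞^n} ≤ ε ) = 1, where ‖·‖_{ℓ_∞^n} is the maximum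 norm on ℝ^n. -/
open MeasureTheory Filter Set Topology
open scoped ENNReal NNReal

/-!
Round the partial sums to the lattice `2εℤ`. Consecutive partial sums differ by `Z_k`, so
consecutive rounded values differ by an integer `d_k` with
`|d_k| + 1 ≤ |Z_k| / (2ε) + 2 = exp (log (|Z_k| / (2ε) + 2))`; hence the rounded path is
`ε`-close to `S_1^n` and is determined by an increment vector `d ∈ ℤⁿ` with
`∏ (|d_k| + 1) ≤ exp (∑_{k<n} log (|Z_k| / (2ε) + 2))`. By the ergodic theorem (in probability,
derived from von Neumann's `L²` theorem by approximating with simple functions) this exponent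
is at most `n (𝔼 log (|Z_1| / (2ε) + 2) + 1)` with probability tending to one. Rankin's trick
bounds the number of `d ∈ ℤⁿ` with `∏ (|d_k| + 1) ≤ B` by
`B² (∑_{j ∈ ℤ} (|j| + 1)⁻²)ⁿ ≤ B² 4ⁿ`, which gives the size of the codebook.
-/

theorem birkhoffSum_eq_sum_comp_iterate {α M : Type*} [AddCommMonoid M] (T : α → α) (f : α → M)
    (n : ℕ) : birkhoffSum T f n = ∑ k ∈ Finset.range n, f ∘ T^[k] := by
  ext
  simp [birkhoffSum]

namespace MeasureTheory

variable {Ω : Type*} [MeasurableSpace Ω] {P : Measure Ω} {T : Ω → Ω}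

section NormedSpace

variable {E : Type*} [NormedAddCommGroup E] [NormedSpace ℝ E] {f : Ω → E}

theorem MeasurePreserving.integral_comp_iterate (hT : MeasurePreserving T P P)
    (hf : AEStronglyMeasurable f P) (k : ℕ) : ∫ ω, f (T^[k] ω) ∂P = ∫ ω, f ω ∂P := by
  have hTk := hT.iterate k
  rw [← integral_map hTk.aemeasurable (by rwa [hTk.map_eq]), hTk.map_eq]

theorem MeasurePreserving.integral_birkhoffAverage (hT : MeasurePreserving T P P)
    (hf : Integrable f P) {n : ℕ} (hn : n ≠ 0) :
    ∫ ω, birkhoffAverage ℝ T f n ω ∂P = ∫ ω, f ω ∂P := by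
  have hint (k : ℕ) : Integrable (fun ω => f (T^[k] ω)) P :=
    ((hT.iterate k).integrable_comp hf.aestronglyMeasurable).2 hf
  simp only [birkhoffAverage, birkhoffSum]
  rw [integral_smul, integral_finsetSum _ fun k _ => hint k]
  simp only [hT.integral_comp_iterate hf.aestronglyMeasurable, Finset.sum_const,
    Finset.card_range, ← Nat.cast_smul_eq_nsmul ℝ, smul_smul]
  rw [inv_mul_cancel₀ (by exact_mod_cast hn), one_smul]

theorem MeasurePreserving.aestronglyMeasurable_birkhoffAverage (hT : MeasurePreserving T P P)
    (hf : AEStronglyMeasurable f P) (n : ℕ) :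
    AEStronglyMeasurable (birkhoffAverage ℝ T f n) P := by
  have havg : birkhoffAverage ℝ T f n = (n : ℝ)⁻¹ • birkhoffSum T f n := rfl
  rw [havg, birkhoffSum_eq_sum_comp_iterate]
  exact (Finset.aestronglyMeasurable_sum _
    fun k _ => hf.comp_measurePreserving (hT.iterate k)).const_smul _

theorem MeasurePreserving.eLpNorm_birkhoffAverage_le (hT : MeasurePreserving T P P)
    (hf : AEStronglyMeasurable f P) {p : ℝ≥0∞} (hp : 1 ≤ p) (n : ℕ) :
    eLpNorm (birkhoffAverage ℝ T f n) p P ≤ eLpNorm f p P := by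
  rcases eq_or_ne n 0 with rfl | hn
  · simp
  have havg : birkhoffAverage ℝ T f n = (n : ℝ)⁻¹ • birkhoffSum T f n := rfl
  calc eLpNorm (birkhoffAverage ℝ T f n) p P
      = ‖(n : ℝ)⁻¹‖ₑ * eLpNorm (birkhoffSum T f n) p P := by
        rw [havg, eLpNorm_const_smul]
    _ ≤ ‖(n : ℝ)⁻¹‖ₑ * ∑ k ∈ Finset.range n, eLpNorm (f ∘ T^[k]) p P := by
        rw [birkhoffSum_eq_sum_comp_iterate]
        gcongr
        exact eLpNorm_sum_le (fun k _ => hf.comp_measurePreserving (hT.iterate k)) hp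
    _ = eLpNorm f p P := by
        simp only [eLpNorm_comp_measurePreserving hf (hT.iterate _), Finset.sum_const,
          Finset.card_range, nsmul_eq_mul]
        rw [← mul_assoc, enorm_inv (by exact_mod_cast hn), ← ofReal_norm]
        simp [ENNReal.inv_mul_cancel, hn]

theorem MeasurePreserving.memLp_birkhoffAverage (hT : MeasurePreserving T P P) {p : ℝ≥0∞}
    (hf : MemLp f p P) (hp : 1 ≤ p) (n : ℕ) : MemLp (birkhoffAverage ℝ T f n) p P :=
  ⟨hT.aestronglyMeasurable_birkhoffAverage hf.1 n,
    (hT.eLpNorm_birkhoffAverage_le hf.1 hp n).trans_lt hf.2⟩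

theorem enorm_integral_le_eLpNorm [IsProbabilityMeasure P] (hf : AEStronglyMeasurable f P)
    {p : ℝ≥0∞} (hp : 1 ≤ p) : ‖∫ ω, f ω ∂P‖ₑ ≤ eLpNorm f p P :=
  calc ‖∫ ω, f ω ∂P‖ₑ ≤ eLpNorm f 1 P := by
        rw [eLpNorm_one_eq_lintegral_enorm]; exact enorm_integral_le_lintegral_enorm f
    _ ≤ eLpNorm f p P := eLpNorm_le_eLpNorm_of_exponent_le hp hf

theorem Lp.coeFn_birkhoffAverage_compMeasurePreserving {p : ℝ≥0∞}
    (hT : MeasurePreserving T P P) {F : Lp E p P} (hF : F =ᵐ[P] f) (n : ℕ) :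
    ⇑(birkhoffAverage ℝ (Lp.compMeasurePreserving T hT) id n F) =ᵐ[P]
      birkhoffAverage ℝ T f n := by
  have hsum : ⇑(birkhoffSum (Lp.compMeasurePreserving T hT) id n F) =ᵐ[P] birkhoffSum T f n := by
    induction n with
    | zero => simpa [birkhoffSum] using Lp.coeFn_zero E p P
    | succ n ih =>
      rw [birkhoffSum_succ, Lp.compMeasurePreserving_iterate]
      filter_upwards [Lp.coeFn_add (birkhoffSum (Lp.compMeasurePreserving T hT) id n F)
          (Lp.compMeasurePreserving T^[n] (hT.iterate n) F), ih,
        Lp.coeFn_compMeasurePreserving F (hT.iterate n),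
        (hT.iterate n).quasiMeasurePreserving.ae_eq_comp hF] with ω hadd hn hcomp hF
      rw [id, hadd, Pi.add_apply, hn, hcomp, birkhoffSum_succ]
      exact congrArg _ hF
  filter_upwards [Lp.coeFn_smul (n : ℝ)⁻¹ (birkhoffSum (Lp.compMeasurePreserving T hT) id n F),
    hsum] with ω hsmul hω
  rw [birkhoffAverage, hsmul, Pi.smul_apply, hω]
  rfl

end NormedSpace

variable {f : Ω → ℝ}

theorem Ergodic.exists_tendsto_eLpNorm_birkhoffAverage_sub_const (hT : Ergodic T P)
    (hf : MemLp f 2 P) :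
    ∃ c : ℝ, Tendsto (fun n => eLpNorm (birkhoffAverage ℝ T f n - fun _ => c) 2 P)
      atTop (𝓝 0) := by
  have hTP := hT.toMeasurePreserving
  let U := (Lp.compMeasurePreservingₗᵢ ℝ T hTP : Lp ℝ 2 P →ₗᵢ[ℝ] Lp ℝ 2 P).toContinuousLinearMap
  obtain ⟨L, hconv, hUL⟩ : ∃ L, Tendsto (birkhoffAverage ℝ U id · (hf.toLp f)) atTop (𝓝 L) ∧
      U L = L :=
    ⟨_, U.tendsto_birkhoffAverage_orthogonalProjection
      (LinearIsometry.norm_toContinuousLinearMap_le _) (hf.toLp f),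
      LinearMap.mem_eqLocus.1 (Subtype.prop _)⟩
  obtain ⟨c, hc⟩ : ∃ c, ⇑L =ᵐ[P] Function.const Ω c := by
    refine hT.ae_eq_const_of_ae_eq_comp_ae (Lp.aestronglyMeasurable L) ?_
    have hUL' : Lp.compMeasurePreserving T hTP L = L := hUL
    simpa only [hUL'] using (Lp.coeFn_compMeasurePreserving L hTP).symm
  refine ⟨c, ?_⟩
  have hnorm (n : ℕ) : eLpNorm (birkhoffAverage ℝ T f n - fun _ => c) 2 P =
      ENNReal.ofReal ‖birkhoffAverage ℝ U id n (hf.toLp f) - L‖ := by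
    rw [Lp.norm_def, ENNReal.ofReal_toReal (Lp.eLpNorm_ne_top _)]
    refine eLpNorm_congr_ae ?_
    filter_upwards [Lp.coeFn_sub (birkhoffAverage ℝ U id n (hf.toLp f)) L,
      Lp.coeFn_birkhoffAverage_compMeasurePreserving hTP hf.coeFn_toLp n, hc]
      with ω hsub havg hcω
    simp only [Pi.sub_apply, hsub, hcω, Function.const_apply]
    rw [← havg]
    rfl
  simp_rw [hnorm]
  simpa using ENNReal.tendsto_ofReal (tendsto_iff_norm_sub_tendsto_zero.1 hconv)

variable [IsProbabilityMeasure P]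

theorem MeasurePreserving.eq_integral_of_tendsto_eLpNorm_birkhoffAverage_sub
    (hT : MeasurePreserving T P P) (hf : Integrable f P) {p : ℝ≥0∞} (hp : 1 ≤ p) {c : ℝ}
    (h : Tendsto (fun n => eLpNorm (birkhoffAverage ℝ T f n - fun _ => c) p P) atTop (𝓝 0)) :
    c = ∫ ω, f ω ∂P := by
  have hAf (n : ℕ) : Integrable (birkhoffAverage ℝ T f n) P :=
    memLp_one_iff_integrable.1 (hT.memLp_birkhoffAverage (memLp_one_iff_integrable.2 hf) le_rfl n)
  have hle : ∀ᶠ n in atTop,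
      ‖∫ ω, f ω ∂P - c‖ₑ ≤ eLpNorm (birkhoffAverage ℝ T f n - fun _ => c) p P := by
    filter_upwards [eventually_ne_atTop 0] with n hn
    have hint : ∫ ω, (birkhoffAverage ℝ T f n ω - c) ∂P = ∫ ω, f ω ∂P - c := by
      rw [integral_sub (hAf n) (integrable_const c), hT.integral_birkhoffAverage hf hn]
      simp
    rw [← hint]
    exact enorm_integral_le_eLpNorm (f := birkhoffAverage ℝ T f n - fun _ => c)
      ((hT.aestronglyMeasurable_birkhoffAverage hf.1 n).sub aestronglyMeasurable_const) hp
  have := ge_of_tendsto h hle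
  rw [nonpos_iff_eq_zero, enorm_eq_zero, sub_eq_zero] at this
  exact this.symm

theorem Ergodic.tendsto_eLpNorm_two_birkhoffAverage_sub_integral (hT : Ergodic T P)
    (hf : MemLp f 2 P) :
    Tendsto (fun n => eLpNorm (birkhoffAverage ℝ T f n - fun _ => ∫ ω, f ω ∂P) 2 P)
      atTop (𝓝 0) := by
  obtain ⟨c, hc⟩ := hT.exists_tendsto_eLpNorm_birkhoffAverage_sub_const hf
  rwa [← hT.toMeasurePreserving.eq_integral_of_tendsto_eLpNorm_birkhoffAverage_sub
    (hf.integrable one_le_two) one_le_two hc]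

theorem MeasurePreserving.eLpNorm_birkhoffAverage_sub_integral_le (hT : MeasurePreserving T P P)
    {g : Ω → ℝ} (hf : Integrable f P) (hg : Integrable g P) (n : ℕ) :
    eLpNorm (birkhoffAverage ℝ T f n - fun _ => ∫ ω, f ω ∂P) 1 P ≤
      eLpNorm (birkhoffAverage ℝ T g n - fun _ => ∫ ω, g ω ∂P) 1 P + 2 * eLpNorm (f - g) 1 P := by
  have hfg := (hf.sub hg).1
  have hsplit : birkhoffAverage ℝ T f n - (fun _ => ∫ ω, f ω ∂P) =
      (birkhoffAverage ℝ T g n - fun _ => ∫ ω, g ω ∂P) +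
        (birkhoffAverage ℝ T (f - g) n - fun _ => ∫ ω, (f - g) ω ∂P) := by
    rw [birkhoffAverage_sub, integral_sub' hf hg]
    ext ω
    simp only [Pi.add_apply, Pi.sub_apply]
    ring
  calc eLpNorm (birkhoffAverage ℝ T f n - fun _ => ∫ ω, f ω ∂P) 1 P
      ≤ eLpNorm (birkhoffAverage ℝ T g n - fun _ => ∫ ω, g ω ∂P) 1 P +
          (eLpNorm (birkhoffAverage ℝ T (f - g) n) 1 P +
            eLpNorm (fun _ => ∫ ω, (f - g) ω ∂P) 1 P) := by
        rw [hsplit]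
        refine (eLpNorm_add_le ?_ ?_ le_rfl).trans (add_le_add_right ?_ _)
        · exact (hT.aestronglyMeasurable_birkhoffAverage hg.1 n).sub aestronglyMeasurable_const
        · exact (hT.aestronglyMeasurable_birkhoffAverage hfg n).sub aestronglyMeasurable_const
        · exact eLpNorm_sub_le (hT.aestronglyMeasurable_birkhoffAverage hfg n)
            aestronglyMeasurable_const le_rfl
    _ ≤ eLpNorm (birkhoffAverage ℝ T g n - fun _ => ∫ ω, g ω ∂P) 1 P +
          (eLpNorm (f - g) 1 P + eLpNorm (f - g) 1 P) := by
        gcongr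
        · exact hT.eLpNorm_birkhoffAverage_le hfg le_rfl n
        · rw [eLpNorm_const _ one_ne_zero (IsProbabilityMeasure.ne_zero P)]
          simpa using enorm_integral_le_eLpNorm hfg le_rfl
    _ = _ := by rw [two_mul]

theorem Ergodic.tendsto_eLpNorm_one_birkhoffAverage_sub_integral (hT : Ergodic T P)
    (hf : Integrable f P) :
    Tendsto (fun n => eLpNorm (birkhoffAverage ℝ T f n - fun _ => ∫ ω, f ω ∂P) 1 P)
      atTop (𝓝 0) := by
  rw [ENNReal.tendsto_nhds_zero]
  intro ε hε
  obtain ⟨h, hfh, -⟩ := (memLp_one_iff_integrable.2 hf).exists_simpleFunc_eLpNorm_sub_lt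
    ENNReal.one_ne_top (ENNReal.half_pos (ENNReal.half_pos hε.ne').ne').ne'
  have hh : MemLp (⇑h) 2 P := h.memLp_of_isFiniteMeasure 2 P
  filter_upwards [ENNReal.tendsto_nhds_zero.1
    (hT.tendsto_eLpNorm_two_birkhoffAverage_sub_integral hh) (ε / 2)
      (ENNReal.half_pos hε.ne')] with n hn
  calc eLpNorm (birkhoffAverage ℝ T f n - fun _ => ∫ ω, f ω ∂P) 1 P
      ≤ eLpNorm (birkhoffAverage ℝ T h n - fun _ => ∫ ω, h ω ∂P) 1 P +
          2 * eLpNorm (f - ⇑h) 1 P :=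
        hT.toMeasurePreserving.eLpNorm_birkhoffAverage_sub_integral_le hf
          (hh.integrable one_le_two) n
    _ ≤ ε / 2 + 2 * (ε / 2 / 2) := by
        gcongr
        refine le_trans (eLpNorm_le_eLpNorm_of_exponent_le one_le_two ?_) hn
        exact (hT.toMeasurePreserving.aestronglyMeasurable_birkhoffAverage hh.1 n).sub
          aestronglyMeasurable_const
    _ = ε := by rw [ENNReal.mul_div_cancel two_ne_zero ENNReal.ofNat_ne_top, ENNReal.add_halves]

theorem Ergodic.tendstoInMeasure_birkhoffAverage (hT : Ergodic T P) (hf : Integrable f P) :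
    TendstoInMeasure P (birkhoffAverage ℝ T f) atTop fun _ => ∫ ω, f ω ∂P :=
  tendstoInMeasure_of_tendsto_eLpNorm one_ne_zero
    (hT.toMeasurePreserving.aestronglyMeasurable_birkhoffAverage hf.1)
    aestronglyMeasurable_const (hT.tendsto_eLpNorm_one_birkhoffAverage_sub_integral hf)

theorem Ergodic.tendsto_measure_le_birkhoffSum (hT : Ergodic T P) (hf : Integrable f P) {δ : ℝ}
    (hδ : 0 < δ) :
    Tendsto (fun n : ℕ => P {ω | n * (∫ ω, f ω ∂P + δ) ≤ birkhoffSum T f n ω}) atTop (𝓝 0) := by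
  refine tendsto_of_tendsto_of_tendsto_of_le_of_le' tendsto_const_nhds
    (hT.tendstoInMeasure_birkhoffAverage hf (ENNReal.ofReal δ) (by simpa using hδ))
    (Eventually.of_forall fun _ => zero_le) ?_
  filter_upwards [eventually_ne_atTop 0] with n hn
  refine measure_mono fun ω hω => ?_
  have hn' : (0 : ℝ) < n := by positivity
  simp only [mem_ofPred_eq, edist_dist, Real.dist_eq] at hω ⊢
  refine ENNReal.ofReal_le_ofReal (le_trans ?_ (le_abs_self _))
  rw [birkhoffAverage, smul_eq_mul, le_sub_iff_add_le, inv_mul_eq_div, le_div_iff₀ hn']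
  linarith

end MeasureTheory

open Finset in
theorem sum_inv_sq_nat_add_one_le (u : Finset ℕ) : ∑ k ∈ u, (((k : ℝ) + 1) ^ 2)⁻¹ ≤ 2 := by
  calc ∑ k ∈ u, (((k : ℝ) + 1) ^ 2)⁻¹ = ∑ i ∈ u.map (addRightEmbedding 1), ((i : ℝ) ^ 2)⁻¹ := by
        simp
    _ ≤ ∑ i ∈ Ioo 0 (u.sup id + 2), ((i : ℝ) ^ 2)⁻¹ := by
        refine sum_le_sum_of_subset_of_nonneg ?_ fun _ _ _ => by positivity
        intro i hi
        obtain ⟨k, hk, rfl⟩ := mem_map.1 hi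
        have : k ≤ u.sup id := le_sup (f := id) hk
        simp only [addRightEmbedding_apply, Finset.mem_Ioo]
        omega
    _ ≤ 2 := by simpa using sum_Ioo_inv_sq_le (α := ℝ) 0 (u.sup id + 2)

open Finset in
theorem sum_inv_sq_abs_add_one_le (s : Finset ℤ) : ∑ j ∈ s, ((|(j : ℝ)| + 1) ^ 2)⁻¹ ≤ 4 := by
  have sum_le_two_of_injOn (t : Finset ℤ) (ht : Set.InjOn Int.natAbs t) :
      ∑ j ∈ t, ((|(j : ℝ)| + 1) ^ 2)⁻¹ ≤ 2 := by
    calc ∑ j ∈ t, ((|(j : ℝ)| + 1) ^ 2)⁻¹ = ∑ k ∈ t.image Int.natAbs, (((k : ℝ) + 1) ^ 2)⁻¹ := by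
          rw [sum_image ht]
          simp [Nat.cast_natAbs]
      _ ≤ 2 := sum_inv_sq_nat_add_one_le _
  rw [← sum_filter_add_sum_filter_not s (0 ≤ ·)]
  refine (add_le_add (sum_le_two_of_injOn _ ?_) (sum_le_two_of_injOn _ ?_)).trans (by norm_num)
  · intro a ha b hb
    simp only [coe_filter, Set.mem_ofPred_eq] at ha hb
    exact (Int.natAbs_inj_of_nonneg_of_nonneg ha.2 hb.2).1
  · intro a ha b hb
    simp only [coe_filter, Set.mem_ofPred_eq, not_le] at ha hb
    exact (Int.natAbs_inj_of_nonpos_of_nonpos ha.2.le hb.2.le).1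

open Finset in
theorem card_le_of_prod_abs_add_one_le {n : ℕ} {B : ℝ} (D : Finset (Fin n → ℤ))
    (hD : ∀ d ∈ D, ∏ i, (|(d i : ℝ)| + 1) ≤ B) : (#D : ℝ) ≤ B ^ 2 * 4 ^ n := by
  classical
  have hweight (d : Fin n → ℤ) (hd : d ∈ D) : 1 ≤ B ^ 2 * ∏ i, ((|(d i : ℝ)| + 1) ^ 2)⁻¹ := by
    have hpos : 0 < ∏ i, (|(d i : ℝ)| + 1) := prod_pos fun i _ => by positivity
    rw [prod_inv_distrib, Finset.prod_pow, ← div_eq_mul_inv, one_le_div (by positivity)]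
    exact pow_le_pow_left₀ hpos.le (hD d hd) 2
  calc (#D : ℝ) = ∑ _d ∈ D, 1 := by simp
    _ ≤ ∑ d ∈ D, B ^ 2 * ∏ i, ((|(d i : ℝ)| + 1) ^ 2)⁻¹ := sum_le_sum hweight
    _ ≤ B ^ 2 * ∑ d ∈ Fintype.piFinset fun i => D.image fun d : Fin n → ℤ => d i,
          ∏ i, ((|(d i : ℝ)| + 1) ^ 2)⁻¹ := by
        rw [← mul_sum]
        gcongr
        exact fun d hd => Fintype.mem_piFinset.2 fun i => mem_image_of_mem _ hd
    _ = B ^ 2 * ∏ i : Fin n, ∑ j ∈ D.image fun d : Fin n → ℤ => d i,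
          ((|(j : ℝ)| + 1) ^ 2)⁻¹ := by
        rw [prod_univ_sum]
    _ ≤ B ^ 2 * ∏ _i : Fin n, (4 : ℝ) := by
        gcongr with i
        exact sum_inv_sq_abs_add_one_le _
    _ = B ^ 2 * 4 ^ n := by simp

/-- The box `[-⌈B⌉, ⌈B⌉]ⁿ` is implied by the product bound (`mem_boundedIncrements`); it is only
there to make the set a `Finset`. -/
noncomputable def boundedIncrements (n : ℕ) (B : ℝ) : Finset (Fin n → ℤ) :=
  (Fintype.piFinset fun _ => Finset.Icc (-⌈B⌉₊ : ℤ) ⌈B⌉₊).filter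
    fun d => ∏ i, (|(d i : ℝ)| + 1) ≤ B

theorem mem_boundedIncrements {n : ℕ} {B : ℝ} {d : Fin n → ℤ} :
    d ∈ boundedIncrements n B ↔ ∏ i, (|(d i : ℝ)| + 1) ≤ B := by
  refine ⟨fun hd => (Finset.mem_filter.1 hd).2, fun hB => Finset.mem_filter.2 ⟨?_, hB⟩⟩
  refine Fintype.mem_piFinset.2 fun i => Finset.mem_Icc.2 (abs_le.1 ?_)
  have hi : |(d i : ℝ)| + 1 ≤ ∏ j, (|(d j : ℝ)| + 1) := by
    rw [← Finset.mul_prod_erase _ _ (Finset.mem_univ i)]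
    exact le_mul_of_one_le_right (by positivity)
      (Finset.one_le_prod fun j _ => le_add_of_nonneg_left (abs_nonneg _))
  have : |(d i : ℝ)| ≤ ⌈B⌉₊ := by linarith [Nat.le_ceil B]
  exact_mod_cast this

def latticePath (τ : ℝ) {n : ℕ} (d : Fin n → ℤ) : Fin n → ℝ :=
  fun i => τ * ∑ k ∈ Finset.Iic i, (d k : ℝ)

noncomputable def codebook (τ B : ℝ) (n : ℕ) : Finset (Fin n → ℝ) :=
  (boundedIncrements n B).image (latticePath τ)

theorem card_codebook_le (τ B : ℝ) (n : ℕ) : ((codebook τ B n).card : ℝ) ≤ B ^ 2 * 4 ^ n :=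
  (Nat.cast_le.2 Finset.card_image_le).trans
    (card_le_of_prod_abs_add_one_le _ fun _ hd => mem_boundedIncrements.1 hd)

theorem abs_sub_mul_round_div_le {τ : ℝ} (hτ : 0 < τ) (x : ℝ) :
    |x - τ * round (x / τ)| ≤ τ / 2 := by
  have h := abs_sub_round (x / τ)
  calc |x - τ * round (x / τ)| = τ * |x / τ - round (x / τ)| := by
        rw [← abs_of_pos hτ, ← abs_mul, abs_of_pos hτ, mul_sub, mul_div_cancel₀ _ hτ.ne']
    _ ≤ τ / 2 := by nlinarith

theorem abs_round_sub_round_le (a b : ℝ) : |((round a - round b : ℤ) : ℝ)| ≤ |a - b| + 1 := by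
  have ha : |(round a : ℝ) - a| ≤ 1 / 2 := by rw [abs_sub_comm]; exact abs_sub_round a
  have hb := abs_sub_round b
  push_cast
  calc |(round a : ℝ) - round b| = |(a - b) + ((round a : ℝ) - a) + (b - round b)| := by ring_nf
    _ ≤ |a - b| + |(round a : ℝ) - a| + |b - round b| := abs_add_three _ _ _
    _ ≤ |a - b| + 1 := by linarith

theorem Fin.sum_Iic_eq_sum_range {M : Type*} [AddCommMonoid M] {n : ℕ} (g : ℕ → M) (i : Fin n) :
    ∑ k ∈ Finset.Iic i, g k = ∑ k ∈ Finset.range (i + 1), g k := by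
  rw [Nat.range_succ_eq_Iic, ← Fin.map_valEmbedding_Iic, Finset.sum_map]
  rfl

theorem exists_mem_codebook_norm_sub_le {τ : ℝ} (hτ : 0 < τ) (x : ℕ → ℝ) {n : ℕ} {B : ℝ}
    (hB : ∏ k ∈ Finset.range n, (|x k| / τ + 2) ≤ B) :
    ∃ s ∈ codebook τ B n, ‖(fun i : Fin n => ∑ k ∈ Finset.range (i + 1), x k) - s‖ ≤ τ / 2 := by
  let m : ℕ → ℤ := fun j => round ((∑ k ∈ Finset.range j, x k) / τ)
  let d : Fin n → ℤ := fun i => m (i + 1) - m i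
  have hstep (k : ℕ) : |((m (k + 1) - m k : ℤ) : ℝ)| + 1 ≤ |x k| / τ + 2 := by
    simp only [m, Finset.sum_range_succ, add_div]
    have := abs_round_sub_round_le ((∑ j ∈ Finset.range k, x j) / τ + x k / τ)
      ((∑ j ∈ Finset.range k, x j) / τ)
    rw [add_sub_cancel_left, abs_div, abs_of_pos hτ] at this
    linarith
  have hd : d ∈ boundedIncrements n B := by
    rw [mem_boundedIncrements]
    calc ∏ i, (|(d i : ℝ)| + 1) ≤ ∏ i : Fin n, (|x i| / τ + 2) :=
          Finset.prod_le_prod (fun i _ => by positivity) fun i _ => hstep i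
      _ = ∏ k ∈ Finset.range n, (|x k| / τ + 2) := Fin.prod_univ_eq_prod_range (|x ·| / τ + 2) n
      _ ≤ B := hB
  have hpath (i : Fin n) : latticePath τ d i = τ * m (i + 1) := by
    simp only [latticePath, d, Int.cast_sub]
    rw [Fin.sum_Iic_eq_sum_range (fun k => (m (k + 1) : ℝ) - m k),
      Finset.sum_range_sub (fun k => (m k : ℝ))]
    simp [m]
  refine ⟨latticePath τ d, Finset.mem_image_of_mem _ hd, ?_⟩
  refine (pi_norm_le_iff_of_nonneg (by positivity)).2 fun i => ?_
  rw [Pi.sub_apply, hpath, Real.norm_eq_abs]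
  exact abs_sub_mul_round_div_le hτ _

theorem tendsto_measure_one_of_compl_subset {α ι : Type*} [MeasurableSpace α] {μ : Measure α}
    [IsProbabilityMeasure μ] {l : Filter ι} {A B : ι → Set α}
    (hB : Tendsto (fun i => μ (B i)) l (𝓝 0)) (hAB : ∀ i, (B i)ᶜ ⊆ A i) :
    Tendsto (fun i => μ (A i)) l (𝓝 1) := by
  have hlow : Tendsto (fun i => 1 - μ (B i)) l (𝓝 1) := by
    simpa using ENNReal.Tendsto.sub tendsto_const_nhds hB (Or.inl ENNReal.one_ne_top)
  refine tendsto_of_tendsto_of_tendsto_of_le_of_le hlow tendsto_const_nhds (fun i => ?_)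
    fun i => prob_le_one
  rw [tsub_le_iff_right, ← measure_univ (μ := μ)]
  exact (measure_mono fun ω _ => (em (ω ∈ B i)).symm.imp (hAB i ·) id).trans
    (measure_union_le _ _)

theorem Real.exp_birkhoffSum_log {α : Type*} (T : α → α) {h : α → ℝ} (hpos : ∀ a, 0 < h a)
    (n : ℕ) (a : α) :
    Real.exp (birkhoffSum T (fun a => Real.log (h a)) n a) = ∏ k ∈ Finset.range n, h (T^[k] a) := by
  simp only [birkhoffSum, Real.exp_sum, Real.exp_log (hpos _)]

/-- **Lemma 6.2.** Let `(Z_i)` be an ergodic stationary sequence of real random variables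
(realized as `Z i = Z 0 ∘ T^i` for an ergodic measure-preserving `T`), `S_n = Σ_{i=1}^n Z_i`
and `ε > 0` with `𝔼[log(|Z_1|/(2ε) + 2)] < ∞`. Then there exist a universal constant
`c < ∞` and codebooks `𝒞_n ⊂ ℝ^n` of size at most `exp{2n 𝔼[log(|Z_1|/(2ε)+2)] + nc}`
such that `ℙ(min_{ŝ ∈ 𝒞_n} ‖S_1^n − ŝ‖_{ℓ^n_∞} ≤ ε) → 1`. -/
theorem ergodic_partial_sum_codebooks :
    ∃ c : ℝ,
      ∀ (Ω : Type) [MeasurableSpace Ω] (P : Measure Ω) [IsProbabilityMeasure P]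
        (T : Ω → Ω) (_ : Ergodic T P) (Z : ℕ → Ω → ℝ) (_ : Measurable (Z 0))
        (_ : ∀ i ω, Z (i + 1) ω = Z i (T ω)) (ε : ℝ) (_ : 0 < ε)
        (_ : Integrable (fun ω => Real.log (|Z 0 ω| / (2 * ε) + 2)) P),
        ∃ 𝒞 : (n : ℕ) → Finset (Fin n → ℝ),
          (∀ n : ℕ, ((𝒞 n).card : ℝ) ≤
            Real.exp (2 * n * (∫ ω, Real.log (|Z 0 ω| / (2 * ε) + 2) ∂P) + n * c)) ∧
          Tendsto (fun n : ℕ =>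
              P {ω | ∃ s ∈ 𝒞 n,
                  ‖(fun i : Fin n => ∑ k ∈ Finset.range (i.1 + 1), Z k ω) - s‖ ≤ ε})
            atTop (𝓝 (1 : ℝ≥0∞)) := by
  refine ⟨2 + Real.log 4, fun Ω _ P _ T hT Z _ hZ ε hε hint => ?_⟩
  set I := ∫ ω, Real.log (|Z 0 ω| / (2 * ε) + 2) ∂P
  have hZT (k : ℕ) (ω : Ω) : Z k ω = Z 0 (T^[k] ω) := by
    induction k generalizing ω with
    | zero => rfl
    | succ k ih => rw [hZ, ih, Function.iterate_succ_apply]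
  refine ⟨fun n => codebook (2 * ε) (Real.exp (n * (I + 1))) n, fun n => ?_, ?_⟩
  · refine (card_codebook_le _ _ n).trans_eq ?_
    rw [← Real.exp_log (by positivity : (0 : ℝ) < 4 ^ n), Real.log_pow, ← Real.exp_nat_mul,
      ← Real.exp_add]
    push_cast
    ring_nf
  refine tendsto_measure_one_of_compl_subset (hT.tendsto_measure_le_birkhoffSum hint one_pos)
    fun n ω hω => ?_
  have hprod : ∏ k ∈ Finset.range n, (|Z k ω| / (2 * ε) + 2) ≤ Real.exp (n * (I + 1)) := by
    simp only [hZT _ ω]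
    refine (Real.exp_birkhoffSum_log T
      (h := fun ω => |Z 0 ω| / (2 * ε) + 2) (fun _ => by positivity) n ω).symm.trans_le ?_
    exact Real.exp_le_exp.2 (not_le.1 (Set.notMem_ofPred_iff.1 hω)).le
  obtain ⟨s, hs, hdist⟩ := exists_mem_codebook_norm_sub_le (by positivity) (Z · ω) hprod
  exact ⟨s, hs, by rwa [mul_div_cancel_left₀ _ two_ne_zero] at hdist⟩
end

section
/- For r ≥ 0 let A_r be [0,∞)-valued random variables, let 0 < q₁ < q₂ and let f : [0,∞) → (0,∞). If 𝔼[A_r^{q₁}]^{1/q₁} ∼ f(r) and 𝔼[A_r^{q₂}]^{1/q₂} ∼ f(r) as r → ∞ (with these moments finite and positive), then A_r ∼ f(r) in probability, i.e. for every ε > 0, ℙ(|A_r/f(r) − 1| ≥ ε) → 0 as r → ∞. -/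
/-!
Put `Y = (A / f) ^ q₁` and `p = q₂ / q₁ > 1`. Then `𝔼[Y] → 1` and `𝔼[Y ^ p] → 1`, so the
expectation of the Bernoulli gap `Y ^ p - 1 - p (Y - 1)` tends to `0`. This gap is nonnegative
and bounded below by a positive constant on `{|Y - 1| ≥ ε}`, so Markov's inequality gives `Y → 1`
in probability, and hence `A / f = Y ^ (1 / q₁) → 1` in probability.
-/

open MeasureTheory Filter Set Topology

noncomputable def bernoulliGap (p y : ℝ) : ℝ := y ^ p - 1 - p * (y - 1)

section BernoulliGap

variable {p : ℝ}

lemma bernoulliGap_one (p : ℝ) : bernoulliGap p 1 = 0 := by simp [bernoulliGap]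

lemma bernoulliGap_nonneg (hp : 1 ≤ p) {y : ℝ} (hy : 0 ≤ y) : 0 ≤ bernoulliGap p y := by
  have := one_add_mul_self_le_rpow_one_add (s := y - 1) (by linarith) hp
  rw [add_sub_cancel] at this
  unfold bernoulliGap
  linarith

lemma hasDerivAt_bernoulliGap (hp : 1 ≤ p) (y : ℝ) :
    HasDerivAt (bernoulliGap p) (p * y ^ (p - 1) - p) y := by
  have hlin : HasDerivAt (fun y : ℝ => p * (y - 1)) p y := by
    simpa using ((hasDerivAt_id y).sub_const 1).const_mul p
  exact ((Real.hasDerivAt_rpow_const (Or.inr hp)).sub_const 1).sub hlin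

lemma strictAntiOn_bernoulliGap (hp : 1 < p) : StrictAntiOn (bernoulliGap p) (Icc 0 1) := by
  refine strictAntiOn_of_deriv_neg (convex_Icc 0 1)
    (fun y _ => (hasDerivAt_bernoulliGap hp.le y).continuousAt.continuousWithinAt) ?_
  intro y hy
  rw [interior_Icc] at hy
  rw [(hasDerivAt_bernoulliGap hp.le y).deriv]
  have : y ^ (p - 1) < 1 := Real.rpow_lt_one hy.1.le hy.2 (by linarith)
  nlinarith

lemma strictMonoOn_bernoulliGap (hp : 1 < p) : StrictMonoOn (bernoulliGap p) (Ici 1) := by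
  refine strictMonoOn_of_deriv_pos (convex_Ici 1)
    (fun y _ => (hasDerivAt_bernoulliGap hp.le y).continuousAt.continuousWithinAt) ?_
  intro y hy
  rw [interior_Ici] at hy
  rw [(hasDerivAt_bernoulliGap hp.le y).deriv]
  have : 1 < y ^ (p - 1) := Real.one_lt_rpow hy (by linarith)
  nlinarith

lemma exists_pos_le_bernoulliGap (hp : 1 < p) {ε : ℝ} (hε : 0 < ε) :
    ∃ δ, 0 < δ ∧ ∀ y, 0 ≤ y → ε ≤ |y - 1| → δ ≤ bernoulliGap p y := by
  set a := max (1 - ε) 0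
  have ha : a ∈ Icc (0 : ℝ) 1 := ⟨le_max_right _ _, max_le (by linarith) zero_le_one⟩
  have ha1 : a < 1 := max_lt (by linarith) one_pos
  have hb : 1 + ε ∈ Ici (1 : ℝ) := by simp [hε.le]
  refine ⟨min (bernoulliGap p a) (bernoulliGap p (1 + ε)), lt_min ?_ ?_, fun y hy hεy => ?_⟩
  · simpa [bernoulliGap_one] using
      strictAntiOn_bernoulliGap hp ha (right_mem_Icc.2 zero_le_one) ha1
  · simpa [bernoulliGap_one] using
      strictMonoOn_bernoulliGap hp self_mem_Ici hb (by linarith)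
  rcases le_abs'.1 hεy with hlow | hhigh
  · have hya : y ≤ a := (by linarith : y ≤ 1 - ε).trans (le_max_left _ _)
    exact (min_le_left _ _).trans <|
      (strictAntiOn_bernoulliGap hp).antitoneOn ⟨hy, hya.trans ha.2⟩ ha hya
  · exact (min_le_right _ _).trans <|
      (strictMonoOn_bernoulliGap hp).monotoneOn hb (mem_Ici.2 (by linarith)) (by linarith)

end BernoulliGap

section ConvergenceInMeasure

variable {ι Ω : Type*} [MeasurableSpace Ω] {P : Measure Ω} {l : Filter ι}

lemma ContinuousAt.comp_tendstoInMeasure_const {E F : Type*} [PseudoMetricSpace E]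
    [PseudoMetricSpace F] {Y : ι → Ω → E} {c : E} {φ : E → F} (hφ : ContinuousAt φ c)
    (hY : TendstoInMeasure P Y l (fun _ => c)) :
    TendstoInMeasure P (fun i ω => φ (Y i ω)) l (fun _ => φ c) := by
  rw [tendstoInMeasure_iff_dist] at hY ⊢
  intro ε hε
  obtain ⟨δ, hδ, hφδ⟩ := Metric.continuousAt_iff.1 hφ ε hε
  refine tendsto_of_tendsto_of_tendsto_of_le_of_le tendsto_const_nhds (hY δ hδ)
    (fun _ => zero_le) fun i => measure_mono fun ω hω => ?_
  exact not_lt.1 fun hlt => (hφδ hlt).not_ge hω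

lemma tendsto_measure_le_of_tendsto_integral [IsFiniteMeasure P] {g : ι → Ω → ℝ}
    (hg : ∀ᶠ i in l, 0 ≤ g i ∧ Integrable (g i) P)
    (hlim : Tendsto (fun i => ∫ ω, g i ω ∂P) l (𝓝 0)) {δ : ℝ} (hδ : 0 < δ) :
    Tendsto (fun i => P {ω | δ ≤ g i ω}) l (𝓝 0) := by
  rw [← ENNReal.tendsto_toReal_zero_iff (fun _ => measure_ne_top _ _)]
  refine squeeze_zero' (Eventually.of_forall fun _ => ENNReal.toReal_nonneg) ?_
    (by simpa using hlim.div_const δ)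
  filter_upwards [hg] with i ⟨hg0, hgint⟩
  rw [le_div_iff₀ hδ, mul_comm]
  exact mul_meas_ge_le_integral_of_nonneg (ae_of_all _ hg0) hgint δ

lemma integrable_bernoulliGap_comp [IsFiniteMeasure P] {Y : Ω → ℝ} (p : ℝ)
    (hY : Integrable Y P) (hYp : Integrable (fun ω => Y ω ^ p) P) :
    Integrable (fun ω => bernoulliGap p (Y ω)) P :=
  (hYp.sub (integrable_const 1)).sub ((hY.sub (integrable_const 1)).const_mul p)

lemma integral_bernoulliGap_comp [IsProbabilityMeasure P] {Y : Ω → ℝ} (p : ℝ)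
    (hY : Integrable Y P) (hYp : Integrable (fun ω => Y ω ^ p) P) :
    ∫ ω, bernoulliGap p (Y ω) ∂P = (∫ ω, Y ω ^ p ∂P) - 1 - p * ((∫ ω, Y ω ∂P) - 1) := by
  have hYp' : Integrable (fun ω => Y ω ^ p - 1) P := hYp.sub (integrable_const 1)
  have hY' : Integrable (fun ω => Y ω - 1) P := hY.sub (integrable_const 1)
  simp only [bernoulliGap]
  rw [integral_sub hYp' (hY'.const_mul p), integral_sub hYp (integrable_const 1),
    integral_const_mul, integral_sub hY (integrable_const 1)]
  simp

lemma tendstoInMeasure_one_of_tendsto_integral_of_tendsto_integral_rpow [IsProbabilityMeasure P]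
    {Y : ι → Ω → ℝ} {p : ℝ} (hp : 1 < p)
    (hY : ∀ᶠ i in l, 0 ≤ Y i ∧ Integrable (Y i) P ∧ Integrable (fun ω => Y i ω ^ p) P)
    (h₁ : Tendsto (fun i => ∫ ω, Y i ω ∂P) l (𝓝 1))
    (hp₁ : Tendsto (fun i => ∫ ω, Y i ω ^ p ∂P) l (𝓝 1)) :
    TendstoInMeasure P Y l (fun _ => 1) := by
  rw [tendstoInMeasure_iff_dist]
  intro ε hε
  obtain ⟨δ, hδ, hgap⟩ := exists_pos_le_bernoulliGap hp hε
  have hlim : Tendsto (fun i => ∫ ω, bernoulliGap p (Y i ω) ∂P) l (𝓝 0) := by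
    have := (hp₁.sub_const 1).sub ((h₁.sub_const 1).const_mul p)
    rw [sub_self, mul_zero, sub_zero] at this
    refine this.congr' ?_
    filter_upwards [hY] with i ⟨_, hi, hip⟩
    exact (integral_bernoulliGap_comp p hi hip).symm
  have hgap_int : ∀ᶠ i in l, 0 ≤ (fun ω => bernoulliGap p (Y i ω)) ∧
      Integrable (fun ω => bernoulliGap p (Y i ω)) P := by
    filter_upwards [hY] with i ⟨h0, hi, hip⟩
    exact ⟨fun ω => bernoulliGap_nonneg hp.le (h0 ω), integrable_bernoulliGap_comp p hi hip⟩
  refine tendsto_of_tendsto_of_tendsto_of_le_of_le' tendsto_const_nhds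
    (tendsto_measure_le_of_tendsto_integral hgap_int hlim hδ)
    (Eventually.of_forall fun _ => zero_le) ?_
  filter_upwards [hY] with i hi
  exact measure_mono fun ω hω => hgap _ (hi.1 ω) (by rwa [← Real.dist_eq])

lemma tendstoInMeasure_one_of_tendsto_moments [IsProbabilityMeasure P] {X : ι → Ω → ℝ}
    {q₁ q₂ : ℝ} (hq₁ : 0 < q₁) (hq₁₂ : q₁ < q₂)
    (hX : ∀ᶠ i in l, 0 ≤ X i ∧ Integrable (fun ω => X i ω ^ q₁) P ∧
      Integrable (fun ω => X i ω ^ q₂) P)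
    (h₁ : Tendsto (fun i => ∫ ω, X i ω ^ q₁ ∂P) l (𝓝 1))
    (h₂ : Tendsto (fun i => ∫ ω, X i ω ^ q₂ ∂P) l (𝓝 1)) :
    TendstoInMeasure P X l (fun _ => 1) := by
  have hpow : ∀ i, 0 ≤ X i → (fun ω => (X i ω ^ q₁) ^ (q₂ / q₁)) = fun ω => X i ω ^ q₂ :=
    fun i h => funext fun ω => by rw [← Real.rpow_mul (h ω), mul_div_cancel₀ _ hq₁.ne']
  have hY : TendstoInMeasure P (fun i ω => X i ω ^ q₁) l (fun _ => 1) := by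
    refine tendstoInMeasure_one_of_tendsto_integral_of_tendsto_integral_rpow
      ((one_lt_div hq₁).2 hq₁₂) ?_ h₁ (h₂.congr' ?_)
    · filter_upwards [hX] with i ⟨h0, hi₁, hi₂⟩
      exact ⟨fun ω => Real.rpow_nonneg (h0 ω) _, hi₁, by rwa [hpow i h0]⟩
    · filter_upwards [hX] with i hi
      rw [hpow i hi.1]
  have hroot :=
    (Real.continuousAt_rpow_const 1 q₁⁻¹ (Or.inl one_ne_zero)).comp_tendstoInMeasure_const hY
  rw [Real.one_rpow] at hroot
  refine hroot.congr' ?_ EventuallyEq.rfl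
  filter_upwards [hX] with i hi
  exact Eventually.of_forall fun ω => Real.rpow_rpow_inv (hi.1 ω) hq₁.ne'

lemma tendsto_integral_div_rpow {X : ι → Ω → ℝ} (hX : ∀ i ω, 0 ≤ X i ω) {c : ι → ℝ}
    (hc : ∀ᶠ i in l, 0 < c i) {q : ℝ} (hq : 0 < q)
    (h : Tendsto (fun i => (∫ ω, X i ω ^ q ∂P) ^ (1 / q) / c i) l (𝓝 1)) :
    Tendsto (fun i => ∫ ω, (X i ω / c i) ^ q ∂P) l (𝓝 1) := by
  have hq' := h.rpow_const (p := q) (Or.inr hq.le)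
  rw [Real.one_rpow] at hq'
  refine hq'.congr' ?_
  filter_upwards [hc] with i hci
  have hI : 0 ≤ ∫ ω, X i ω ^ q ∂P := integral_nonneg fun ω => Real.rpow_nonneg (hX i ω) q
  simp_rw [Real.div_rpow (hX i _) hci.le, integral_div,
    Real.div_rpow (Real.rpow_nonneg hI _) hci.le, ← Real.rpow_mul hI,
    one_div_mul_cancel hq.ne', Real.rpow_one]

end ConvergenceInMeasure

theorem equivalent_moments_implies_convergence_in_probability_general
    {Ω : Type*} [MeasurableSpace Ω] (P : Measure Ω) [IsProbabilityMeasure P]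
    (A : ℝ → Ω → ℝ) (hA0 : ∀ r ω, 0 ≤ A r ω)
    (q₁ q₂ : ℝ) (hq₁ : 0 < q₁) (hq₁₂ : q₁ < q₂)
    (f : ℝ → ℝ) (hf : ∀ r, 0 ≤ r → 0 < f r)
    (hint₁ : ∀ r, Integrable (fun ω => A r ω ^ q₁) P)
    (hint₂ : ∀ r, Integrable (fun ω => A r ω ^ q₂) P)
    (h₁ : Tendsto (fun r => (∫ ω, A r ω ^ q₁ ∂P) ^ (1 / q₁) / f r) atTop (𝓝 1))
    (h₂ : Tendsto (fun r => (∫ ω, A r ω ^ q₂ ∂P) ^ (1 / q₂) / f r) atTop (𝓝 1)) :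
    ∀ ε : ℝ, 0 < ε →
      Tendsto (fun r => P {ω | ε ≤ |A r ω / f r - 1|}) atTop (𝓝 0) := by
  have hf' : ∀ᶠ r in atTop, 0 < f r := (eventually_ge_atTop 0).mono hf
  have hX : TendstoInMeasure P (fun r ω => A r ω / f r) atTop (fun _ => 1) := by
    refine tendstoInMeasure_one_of_tendsto_moments hq₁ hq₁₂ ?_
      (tendsto_integral_div_rpow hA0 hf' hq₁ h₁)
      (tendsto_integral_div_rpow hA0 hf' (hq₁.trans hq₁₂) h₂)
    filter_upwards [hf'] with r hr
    simp_rw [Real.div_rpow (hA0 r _) hr.le]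
    exact ⟨fun ω => div_nonneg (hA0 r ω) hr.le, (hint₁ r).div_const _, (hint₂ r).div_const _⟩
  intro ε hε
  simpa only [Real.dist_eq] using tendstoInMeasure_iff_dist.1 hX ε hε

/-- **Lemma A.1.** For `r ≥ 0` let `A_r` be nonnegative random variables, `0 < q₁ < q₂`
and `f : [0,∞) → (0,∞)`. If `𝔼[A_r^{q₁}]^{1/q₁} ∼ f(r)` and `𝔼[A_r^{q₂}]^{1/q₂} ∼ f(r)`
as `r → ∞` (these moments being finite), then `A_r ∼ f(r)` in probability. -/
theorem equivalent_moments_implies_convergence_in_probability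
    {Ω : Type*} [MeasurableSpace Ω] (P : Measure Ω) [IsProbabilityMeasure P]
    (A : ℝ → Ω → ℝ) (hA0 : ∀ r ω, 0 ≤ A r ω) (hAmeas : ∀ r, Measurable (A r))
    (q₁ q₂ : ℝ) (hq₁ : 0 < q₁) (hq₁₂ : q₁ < q₂)
    (f : ℝ → ℝ) (hf : ∀ r, 0 ≤ r → 0 < f r)
    (hint₁ : ∀ r, Integrable (fun ω => A r ω ^ q₁) P)
    (hint₂ : ∀ r, Integrable (fun ω => A r ω ^ q₂) P)
    (h₁ : Tendsto (fun r => (∫ ω, A r ω ^ q₁ ∂P) ^ (1 / q₁) / f r) atTop (𝓝 1))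
    (h₂ : Tendsto (fun r => (∫ ω, A r ω ^ q₂ ∂P) ^ (1 / q₂) / f r) atTop (𝓝 1)) :
    ∀ ε : ℝ, 0 < ε →
      Tendsto (fun r => P {ω | ε ≤ |A r ω / f r - 1|}) atTop (𝓝 0) :=
  equivalent_moments_implies_convergence_in_probability_general P A hA0 q₁ q₂ hq₁ hq₁₂ f hf hint₁
    hint₂ h₁ h₂
end

section
/- Let f : [0,∞) → (0,∞) be a decreasing convex function with lim_{r→∞} f(r) = 0 and limsup_{r→∞} (−r · ∂⁺f(r)) / f(r) < ∞, where ∂⁺ denotes the right derivative. Let ℱ be a family of pairs (A,B) of [0,∞]-valued random variables such that lim_{r→∞} sup_{(A,B)∈ℱ} ℙ(A ≤ f(r), B ≤ r) = 0. For r ≥ 0 set ℱ_r = {A : (A,B) ∈ ℱ, 𝔼[B] ≤ r}. Then liminf_{r→∞} (inf_{A ∈ ℱ_r} 𝔼[A]) / f(r) ≥ 1. -/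
open MeasureTheory Filter Set Topology
open scoped ENNReal

/-!
For `r > 0` let `m = -∂⁺f(r) ≥ 0`, so that `m r ≤ C f(r)` for large `r`. The tangent line of `f`
at `r`, evaluated at `max(B, s₀) ≤ B + s₀` and integrated using `𝔼 B ≤ r`, gives
`f(r) ≤ 𝔼 f(max(B, s₀)) + m s₀`. By the layer-cake formula, `𝔼 f(max(B, s₀))` integrates over
the levels `t = f(s)`, `s ≥ s₀`, the probabilities `ℙ(B < s) ≤ ℙ(A > t) + ℙ(A ≤ f(s), B ≤ s)`,
hence is at most `𝔼 A + η f(s₀)` when `η` bounds the two-sided probabilities beyond `s₀`.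
Take `s₀ = δ r` with `δ` small: then `m s₀ ≤ C δ f(r)`, and iterating the tangent bound
`f(u) ≤ 2 f(u (1 + 1/(2C)))` gives `f(δ r) ≤ K f(r)`, so `η f(s₀)` is small compared to `f(r)`.
-/

lemma AntitoneOn.nonneg_of_tendsto_zero {f : ℝ → ℝ} {a x : ℝ} (hanti : AntitoneOn f (Ici a))
    (hlim : Tendsto f atTop (𝓝 0)) (hx : a ≤ x) : 0 ≤ f x :=
  le_of_tendsto hlim (eventually_atTop.2 ⟨x, fun _ hy => hanti hx (hx.trans hy) hy⟩)

lemma ConvexOn.add_rightDeriv_mul_sub_le {S : Set ℝ} {f : ℝ → ℝ} {x y : ℝ}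
    (hfc : ConvexOn ℝ S f) (hx : x ∈ interior S) (hy : y ∈ S) :
    f x + derivWithin f (Ioi x) x * (y - x) ≤ f y := by
  rcases lt_trichotomy y x with hyx | rfl | hxy
  · have hslope : slope f y x ≤ derivWithin f (Ioi x) x :=
      (hfc.slope_le_leftDeriv_of_mem_interior hy hx hyx).trans
        (hfc.leftDeriv_le_rightDeriv_of_mem_interior hx)
    rw [slope_def_field, div_le_iff₀ (sub_pos.2 hyx)] at hslope
    linarith
  · simp
  · have hslope := hfc.rightDeriv_le_slope_of_mem_interior hx hy hxy
    rw [slope_def_field, le_div_iff₀ (sub_pos.2 hxy)] at hslope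
    linarith

lemma ConvexOn.rightDeriv_nonpos {S : Set ℝ} {f : ℝ → ℝ} {x : ℝ} (hfc : ConvexOn ℝ S f)
    (hanti : AntitoneOn f S) (hx : x ∈ interior S) : derivWithin f (Ioi x) x ≤ 0 := by
  have hright : S ∩ Ioi x ∈ 𝓝[>] x :=
    inter_mem (nhdsWithin_le_nhds (mem_interior_iff_mem_nhds.1 hx)) self_mem_nhdsWithin
  obtain ⟨y, hyS, hxy⟩ := Filter.nonempty_of_mem hright
  have hslope := hfc.rightDeriv_le_slope_of_mem_interior hx hyS hxy
  rw [slope_def_field] at hslope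
  exact hslope.trans (div_nonpos_of_nonpos_of_nonneg
    (sub_nonpos.2 (hanti (interior_subset hx) hyS hxy.le)) (sub_pos.2 hxy).le)

lemma ConvexOn.le_two_mul_of_neg_rightDeriv_le {f : ℝ → ℝ} {C u : ℝ}
    (hfc : ConvexOn ℝ (Ici 0) f) (hC : 0 < C) (hu : 0 < u)
    (hder : -(u * derivWithin f (Ioi u) u) ≤ C * f u) :
    f u ≤ 2 * f (u * (1 + (2 * C)⁻¹)) := by
  have htan := hfc.add_rightDeriv_mul_sub_le (x := u) (y := u * (1 + (2 * C)⁻¹))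
    (by simpa using hu) (by simp only [mem_Ici]; positivity)
  have hstep : u * (1 + (2 * C)⁻¹) - u = u * (2 * C)⁻¹ := by ring
  rw [hstep] at htan
  have hscaled : -(C * f u) * (2 * C)⁻¹ ≤ u * derivWithin f (Ioi u) u * (2 * C)⁻¹ :=
    mul_le_mul_of_nonneg_right (by linarith) (by positivity)
  have hhalf : -(C * f u) * (2 * C)⁻¹ = -(f u / 2) := by field_simp
  have hcomm : derivWithin f (Ioi u) u * (u * (2 * C)⁻¹)
      = u * derivWithin f (Ioi u) u * (2 * C)⁻¹ := by ring
  linarith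

lemma ConvexOn.exists_le_mul_of_neg_rightDeriv_le {f : ℝ → ℝ} {C δ : ℝ}
    (hfc : ConvexOn ℝ (Ici 0) f) (hanti : AntitoneOn f (Ici 0)) (hC : 0 < C)
    (hder : ∀ᶠ u in atTop, -(u * derivWithin f (Ioi u) u) ≤ C * f u) (hδ : 0 < δ) :
    ∃ K > 0, ∀ᶠ r in atTop, f (δ * r) ≤ K * f r := by
  obtain ⟨R, hR⟩ := eventually_atTop.1 (hder.and (eventually_gt_atTop 0))
  set q := 1 + (2 * C)⁻¹
  have hq : 1 < q := by simp only [q]; linarith [inv_pos.2 (mul_pos two_pos hC)]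
  have hiter : ∀ k : ℕ, ∀ u ≥ R, f u ≤ 2 ^ k * f (u * q ^ k) := by
    intro k
    induction k with
    | zero => simp
    | succ k ih =>
      intro u hu
      have huk : R ≤ u * q ^ k :=
        hu.trans (le_mul_of_one_le_right (hR u hu).2.le (one_le_pow₀ hq.le))
      have hdouble := hfc.le_two_mul_of_neg_rightDeriv_le hC (hR _ huk).2 (hR _ huk).1
      calc f u ≤ 2 ^ k * f (u * q ^ k) := ih u hu
        _ ≤ 2 ^ k * (2 * f (u * q ^ k * q)) := by gcongr
        _ = 2 ^ (k + 1) * f (u * q ^ (k + 1)) := by rw [pow_succ, pow_succ, mul_assoc u]; ring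
  obtain ⟨k, hk⟩ := pow_unbounded_of_one_lt δ⁻¹ hq
  refine ⟨2 ^ k, by positivity, ?_⟩
  filter_upwards [(tendsto_id.const_mul_atTop hδ).eventually_ge_atTop R,
    eventually_ge_atTop 0] with r hr hr0
  have hgrow : r ≤ δ * r * q ^ k := by
    have : 1 ≤ δ * q ^ k := by
      rw [← inv_mul_le_iff₀ hδ, mul_one]; exact hk.le
    nlinarith
  calc f (δ * r) ≤ 2 ^ k * f (δ * r * q ^ k) := hiter k _ hr
    _ ≤ 2 ^ k * f r := by gcongr; exact hanti (mem_Ici.2 hr0) (mem_Ici.2 (hr0.trans hgrow)) hgrow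

lemma lintegral_ofReal_le_add_of_meas_lt_le {Ω : Type*} [MeasurableSpace Ω] {μ : Measure Ω}
    {X : Ω → ℝ} {A : Ω → ℝ≥0∞} {c : ℝ} {η : ℝ≥0∞} (hX : Measurable X) (hA : Measurable A)
    (hX0 : ∀ ω, 0 ≤ X ω) (hXc : ∀ ω, X ω ≤ c)
    (hlevel : ∀ t ∈ Ioo 0 c, μ {ω | t < X ω} ≤ μ {ω | ENNReal.ofReal t < A ω} + η) :
    ∫⁻ ω, ENNReal.ofReal (X ω) ∂μ ≤ ∫⁻ ω, A ω ∂μ + η * ENNReal.ofReal c := by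
  -- truncating `A` at level `c` makes it real-valued without changing the levels below `c`
  set Y : Ω → ℝ := fun ω => (min (A ω) (ENNReal.ofReal c)).toReal
  have hY : Measurable Y := (hA.min measurable_const).ennreal_toReal
  have hYA : ∀ ω, ENNReal.ofReal (Y ω) ≤ A ω := fun ω => by
    simp only [Y, ENNReal.ofReal_toReal (min_lt_of_right_lt ENNReal.ofReal_lt_top).ne]
    exact min_le_left _ _
  have hlevel' : ∀ t ∈ Ioi (0 : ℝ),
      μ {ω | t < X ω} ≤ μ {ω | t < Y ω} + (Iio c).indicator (fun _ => η) t := by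
    intro t ht
    by_cases htc : t < c
    · have hset : {ω | ENNReal.ofReal t < A ω} = {ω | t < Y ω} := by
        ext ω
        simp only [Y, mem_ofPred_eq, ← ENNReal.ofReal_lt_iff_lt_toReal (le_of_lt ht)
          (min_lt_of_right_lt ENNReal.ofReal_lt_top).ne, lt_min_iff,
          ENNReal.ofReal_lt_ofReal_iff_of_nonneg (le_of_lt ht), htc, and_true]
      simpa [htc, hset] using hlevel t ⟨ht, htc⟩
    · have hempty : {ω | t < X ω} = ∅ :=
        eq_empty_of_forall_notMem fun ω hω => htc ((mem_ofPred_eq ▸ hω).trans_le (hXc ω))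
      simp [hempty]
  calc ∫⁻ ω, ENNReal.ofReal (X ω) ∂μ = ∫⁻ t in Ioi 0, μ {ω | t < X ω} :=
        lintegral_eq_lintegral_meas_lt μ (ae_of_all _ hX0) hX.aemeasurable
    _ ≤ ∫⁻ t in Ioi 0, (μ {ω | t < Y ω} + (Iio c).indicator (fun _ => η) t) :=
        setLIntegral_mono' measurableSet_Ioi hlevel'
    _ = ∫⁻ ω, ENNReal.ofReal (Y ω) ∂μ + η * ENNReal.ofReal c := by
        rw [lintegral_add_right _ (measurable_const.indicator measurableSet_Iio),
          ← lintegral_eq_lintegral_meas_lt μ (ae_of_all _ fun _ => ENNReal.toReal_nonneg)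
            hY.aemeasurable,
          lintegral_indicator_const measurableSet_Iio, Measure.restrict_apply measurableSet_Iio,
          Iio_inter_Ioi, Real.volume_Ioo, sub_zero]
    _ ≤ ∫⁻ ω, A ω ∂μ + η * ENNReal.ofReal c := by gcongr with ω; exact hYA ω

lemma meas_lt_comp_max_le_add {Ω : Type*} [MeasurableSpace Ω] {P : Measure Ω} {f : ℝ → ℝ}
    {A B : Ω → ℝ≥0∞} {s₀ t : ℝ} {η : ℝ≥0∞} (hcont : ContinuousOn f (Ici s₀))
    (hanti : AntitoneOn f (Ici s₀)) (hlim : Tendsto f atTop (𝓝 0))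
    (hBfin : ∀ᵐ ω ∂P, B ω ≠ ∞)
    (hη : ∀ s ≥ s₀, P {ω | A ω ≤ ENNReal.ofReal (f s) ∧ B ω ≤ ENNReal.ofReal s} ≤ η)
    (ht : t ∈ Ioo 0 (f s₀)) :
    P {ω | t < f (max (B ω).toReal s₀)} ≤ P {ω | ENNReal.ofReal t < A ω} + η := by
  obtain ⟨S, hfS, hS⟩ :=
    ((hlim.eventually (gt_mem_nhds ht.1)).and (eventually_ge_atTop s₀)).exists
  obtain ⟨s, ⟨hs₀s, -⟩, rfl⟩ :=
    intermediate_value_Icc' hS (hcont.mono Icc_subset_Ici_self) ⟨hfS.le, ht.2.le⟩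
  have hsub : ∀ᵐ ω ∂P, ω ∈ {ω | f s < f (max (B ω).toReal s₀)} →
      ω ∈ {ω | ENNReal.ofReal (f s) < A ω} ∪
        {ω | A ω ≤ ENNReal.ofReal (f s) ∧ B ω ≤ ENNReal.ofReal s} := by
    filter_upwards [hBfin] with ω hω hlt
    have hBs : (B ω).toReal < s := by
      by_contra! hge
      exact (hanti (mem_Ici.2 hs₀s) (mem_Ici.2 (le_max_right _ _))
        (hge.trans (le_max_left _ _))).not_gt hlt
    have hBs' : B ω ≤ ENNReal.ofReal s := by
      rw [← ENNReal.ofReal_toReal hω]; exact ENNReal.ofReal_le_ofReal hBs.le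
    rcases lt_or_ge (ENNReal.ofReal (f s)) (A ω) with hA | hA
    · exact Or.inl hA
    · exact Or.inr ⟨hA, hBs'⟩
  calc _ ≤ _ := measure_mono_ae hsub
    _ ≤ _ := measure_union_le _ _
    _ ≤ _ := by gcongr; exact hη s hs₀s

lemma ConvexOn.ofReal_le_lintegral_comp_max_add {Ω : Type*} [MeasurableSpace Ω] {P : Measure Ω}
    [IsProbabilityMeasure P] {f : ℝ → ℝ} {B : Ω → ℝ≥0∞} {r s₀ : ℝ}
    (hfc : ConvexOn ℝ (Ici 0) f) (hanti : AntitoneOn f (Ici 0)) (hB : Measurable B)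
    (hr : 0 < r) (hfr : 0 ≤ f r) (hs₀ : 0 ≤ s₀) (hBr : ∫⁻ ω, B ω ∂P ≤ ENNReal.ofReal r) :
    ENNReal.ofReal (f r) ≤ ∫⁻ ω, ENNReal.ofReal (f (max (B ω).toReal s₀)) ∂P +
      ENNReal.ofReal (-derivWithin f (Ioi r) r * s₀) := by
  set m := -derivWithin f (Ioi r) r
  have hr_int : r ∈ interior (Ici (0 : ℝ)) := by simpa using hr
  have hm : 0 ≤ m := neg_nonneg.2 (hfc.rightDeriv_nonpos hanti hr_int)
  have hpoint : ∀ ω, ENNReal.ofReal (f r) + ENNReal.ofReal (m * r) ≤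
      ENNReal.ofReal (f (max (B ω).toReal s₀)) + ENNReal.ofReal m * B ω +
        ENNReal.ofReal (m * s₀) := by
    intro ω
    set b := (B ω).toReal
    have hb : 0 ≤ b := ENNReal.toReal_nonneg
    have htan := hfc.add_rightDeriv_mul_sub_le hr_int (mem_Ici.2 (hs₀.trans (le_max_right b s₀)))
    have hmax : m * max b s₀ ≤ m * b + m * s₀ := by
      rw [← mul_add]; exact mul_le_mul_of_nonneg_left (max_le_add_of_nonneg hb hs₀) hm
    calc ENNReal.ofReal (f r) + ENNReal.ofReal (m * r) = ENNReal.ofReal (f r + m * r) :=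
          (ENNReal.ofReal_add hfr (mul_nonneg hm hr.le)).symm
      _ ≤ ENNReal.ofReal (f (max b s₀) + m * b + m * s₀) := by
          apply ENNReal.ofReal_le_ofReal; linarith
      _ ≤ ENNReal.ofReal (f (max b s₀)) + ENNReal.ofReal (m * b) + ENNReal.ofReal (m * s₀) :=
          ENNReal.ofReal_add_le.trans (by gcongr; exact ENNReal.ofReal_add_le)
      _ ≤ _ := by
          rw [ENNReal.ofReal_mul hm]
          gcongr
          exact ENNReal.ofReal_toReal_le
  have hint := lintegral_mono (μ := P) hpoint
  rw [lintegral_const, measure_univ, mul_one, lintegral_add_right _ measurable_const,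
    lintegral_add_right _ (hB.const_mul _), lintegral_const, measure_univ, mul_one,
    lintegral_const_mul _ hB] at hint
  have hBm : ENNReal.ofReal m * ∫⁻ ω, B ω ∂P ≤ ENNReal.ofReal (m * r) := by
    rw [ENNReal.ofReal_mul hm]; gcongr
  rw [← ENNReal.add_le_add_iff_right (ENNReal.ofReal_ne_top (r := m * r))]
  calc _ ≤ _ := hint
    _ ≤ ∫⁻ ω, ENNReal.ofReal (f (max (B ω).toReal s₀)) ∂P + ENNReal.ofReal (m * r) +
          ENNReal.ofReal (m * s₀) := by gcongr
    _ = _ := add_right_comm _ _ _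

lemma ConvexOn.ofReal_le_lintegral_add {Ω : Type*} [MeasurableSpace Ω] {P : Measure Ω}
    [IsProbabilityMeasure P] {f : ℝ → ℝ} {A B : Ω → ℝ≥0∞} {r s₀ : ℝ} {η : ℝ≥0∞}
    (hfc : ConvexOn ℝ (Ici 0) f) (hanti : AntitoneOn f (Ici 0)) (hlim : Tendsto f atTop (𝓝 0))
    (hA : Measurable A) (hB : Measurable B) (hr : 0 < r) (hs₀ : 0 < s₀)
    (hBr : ∫⁻ ω, B ω ∂P ≤ ENNReal.ofReal r)
    (hη : ∀ s ≥ s₀, P {ω | A ω ≤ ENNReal.ofReal (f s) ∧ B ω ≤ ENNReal.ofReal s} ≤ η) :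
    ENNReal.ofReal (f r) ≤ ∫⁻ ω, A ω ∂P + η * ENNReal.ofReal (f s₀) +
      ENNReal.ofReal (-derivWithin f (Ioi r) r * s₀) := by
  have hf0 : ∀ x, 0 ≤ x → 0 ≤ f x := fun _ => hanti.nonneg_of_tendsto_zero hlim
  have hmax : ∀ x, max x s₀ ∈ Ici 0 := fun x => hs₀.le.trans (le_max_right x s₀)
  have hanti_max : Antitone fun x => f (max x s₀) := fun x y hxy =>
    hanti (hmax x) (hmax y) (max_le_max_right s₀ hxy)
  have hcont : ContinuousOn f (Ici s₀) :=
    hfc.continuousOn_interior.mono (by simpa using Ici_subset_Ioi.2 hs₀)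
  have hBfin : ∀ᵐ ω ∂P, B ω ≠ ∞ :=
    (ae_lt_top hB (hBr.trans_lt ENNReal.ofReal_lt_top).ne).mono fun _ h => h.ne
  calc ENNReal.ofReal (f r)
      ≤ ∫⁻ ω, ENNReal.ofReal (f (max (B ω).toReal s₀)) ∂P +
          ENNReal.ofReal (-derivWithin f (Ioi r) r * s₀) :=
        hfc.ofReal_le_lintegral_comp_max_add hanti hB hr (hf0 r hr.le) hs₀.le hBr
    _ ≤ _ := by
        gcongr
        exact lintegral_ofReal_le_add_of_meas_lt_le (hanti_max.measurable.comp hB.ennreal_toReal)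
          hA (fun ω => hf0 _ (hmax _))
          (fun ω => hanti (mem_Ici.2 hs₀.le) (hmax _) (le_max_right _ _))
          (fun t ht => meas_lt_comp_max_le_add hcont (hanti.mono (Ici_subset_Ici.2 hs₀.le))
            hlim hBfin hη ht)

lemma ConvexOn.eventually_ofReal_mul_le_lintegral {Ω : Type*} [MeasurableSpace Ω]
    {P : Measure Ω} [IsProbabilityMeasure P] {f : ℝ → ℝ} {C ε : ℝ}
    (hfc : ConvexOn ℝ (Ici 0) f) (hanti : AntitoneOn f (Ici 0)) (hlim : Tendsto f atTop (𝓝 0))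
    (hC : 0 < C) (hder : ∀ᶠ u in atTop, -(u * derivWithin f (Ioi u) u) ≤ C * f u)
    (𝓕 : Set ((Ω → ℝ≥0∞) × (Ω → ℝ≥0∞))) (hmeas : ∀ p ∈ 𝓕, Measurable p.1 ∧ Measurable p.2)
    (h𝓕 : Tendsto (fun r : ℝ =>
        ⨆ p ∈ 𝓕, P {ω | p.1 ω ≤ ENNReal.ofReal (f r) ∧ p.2 ω ≤ ENNReal.ofReal r})
      atTop (𝓝 0)) (hε : 0 < ε) :
    ∀ᶠ r in atTop, ∀ p ∈ 𝓕, ∫⁻ ω, p.2 ω ∂P ≤ ENNReal.ofReal r →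
      ENNReal.ofReal ((1 - ε) * f r) ≤ ∫⁻ ω, p.1 ω ∂P := by
  set δ := ε / (2 * C)
  have hδ : 0 < δ := by positivity
  obtain ⟨K, hK, hdouble⟩ := hfc.exists_le_mul_of_neg_rightDeriv_le hanti hC hder hδ
  set ε' := ε / (2 * K)
  obtain ⟨R, hR⟩ := eventually_atTop.1
    (h𝓕.eventually (ge_mem_nhds (ENNReal.ofReal_pos.2 (by positivity : 0 < ε'))))
  filter_upwards [eventually_gt_atTop 0, hder, hdouble,
    (tendsto_id.const_mul_atTop hδ).eventually_ge_atTop R] with r hr hderr hdoubler hδr p hp hBr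
  have hη : ∀ s ≥ δ * r,
      P {ω | p.1 ω ≤ ENNReal.ofReal (f s) ∧ p.2 ω ≤ ENNReal.ofReal s} ≤ ENNReal.ofReal ε' :=
    fun s hs => (le_iSup₂ (f := fun p (_ : p ∈ 𝓕) =>
      P {ω | p.1 ω ≤ ENNReal.ofReal (f s) ∧ p.2 ω ≤ ENNReal.ofReal s}) p hp).trans
        (hR s (hδr.trans hs))
  have hmain := hfc.ofReal_le_lintegral_add hanti hlim (hmeas p hp).1 (hmeas p hp).2 hr
    (by positivity) hBr hη
  have hfr : 0 ≤ f r := hanti.nonneg_of_tendsto_zero hlim hr.le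
  have hfδr : 0 ≤ f (δ * r) := hanti.nonneg_of_tendsto_zero hlim (by positivity)
  have herr : ENNReal.ofReal ε' * ENNReal.ofReal (f (δ * r)) +
      ENNReal.ofReal (-derivWithin f (Ioi r) r * (δ * r)) ≤ ENNReal.ofReal (ε * f r) := by
    have h₁ : ε' * f (δ * r) ≤ ε / 2 * f r := by
      calc ε' * f (δ * r) ≤ ε' * (K * f r) := by gcongr
        _ = ε / 2 * f r := by simp only [ε']; field_simp
    have h₂ : -derivWithin f (Ioi r) r * (δ * r) ≤ ε / 2 * f r := by
      calc -derivWithin f (Ioi r) r * (δ * r) = -(r * derivWithin f (Ioi r) r) * δ := by ring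
        _ ≤ C * f r * δ := by gcongr
        _ = ε / 2 * f r := by simp only [δ]; field_simp
    rw [← ENNReal.ofReal_mul (by positivity), show ε * f r = ε / 2 * f r + ε / 2 * f r by ring,
      ENNReal.ofReal_add (by positivity) (by positivity)]
    exact add_le_add (ENNReal.ofReal_le_ofReal h₁) (ENNReal.ofReal_le_ofReal h₂)
  rw [sub_mul, one_mul, ENNReal.ofReal_sub _ (by positivity), tsub_le_iff_right]
  exact hmain.trans (by rw [add_assoc]; gcongr)

/-- **Lemma A.3.** Let `f : [0,∞) → ℝ₊` be decreasing and convex with `f(r) → 0` and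
`limsup_{r→∞} (−r ∂⁺f(r))/f(r) < ∞`, and let `ℱ` be a family of pairs `(A,B)` of
`[0,∞]`-valued random variables with
`lim_{r→∞} sup_{(A,B)∈ℱ} ℙ(A ≤ f(r), B ≤ r) = 0`. Then, with
`ℱ_r = {A : (A,B) ∈ ℱ, 𝔼 B ≤ r}`, one has `inf_{A∈ℱ_r} 𝔼 A ≳ f(r)` as `r → ∞`. -/
theorem lower_bound_from_two_sided_constraint
    {Ω : Type*} [MeasurableSpace Ω] (P : Measure Ω) [IsProbabilityMeasure P]
    (f : ℝ → ℝ) (hfpos : ∀ r, 0 ≤ r → 0 < f r)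
    (hanti : AntitoneOn f (Set.Ici 0)) (hconv : ConvexOn ℝ (Set.Ici 0) f)
    (hlim : Tendsto f atTop (𝓝 0))
    (hder : IsBoundedUnder (· ≤ ·) atTop
      fun r : ℝ => -(r * derivWithin f (Set.Ici r) r) / f r)
    (𝓕 : Set ((Ω → ℝ≥0∞) × (Ω → ℝ≥0∞)))
    (hmeas : ∀ p ∈ 𝓕, Measurable p.1 ∧ Measurable p.2)
    (h𝓕 : Tendsto (fun r : ℝ =>
        ⨆ p ∈ 𝓕, P {ω | p.1 ω ≤ ENNReal.ofReal (f r) ∧ p.2 ω ≤ ENNReal.ofReal r})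
      atTop (𝓝 0)) :
    1 ≤ Filter.liminf (fun r : ℝ =>
        (⨅ p ∈ {p ∈ 𝓕 | ∫⁻ ω, p.2 ω ∂P ≤ ENNReal.ofReal r}, ∫⁻ ω, p.1 ω ∂P) /
          ENNReal.ofReal (f r)) atTop := by
  obtain ⟨C, hC⟩ := hder
  have hderC : ∀ᶠ u in atTop, -(u * derivWithin f (Ioi u) u) ≤ max C 1 * f u := by
    filter_upwards [eventually_map.1 hC, eventually_ge_atTop 0] with u hu hu0
    rw [derivWithin_Ioi_eq_Ici, ← div_le_iff₀ (hfpos u hu0)]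
    exact hu.trans (le_max_left C 1)
  have hε : ∀ ε > 0, ENNReal.ofReal (1 - ε) ≤ Filter.liminf (fun r : ℝ =>
      (⨅ p ∈ {p ∈ 𝓕 | ∫⁻ ω, p.2 ω ∂P ≤ ENNReal.ofReal r}, ∫⁻ ω, p.1 ω ∂P) /
        ENNReal.ofReal (f r)) atTop := by
    intro ε hε
    refine le_liminf_of_le (by isBoundedDefault) ?_
    filter_upwards [hconv.eventually_ofReal_mul_le_lintegral hanti hlim (by positivity) hderC
      𝓕 hmeas h𝓕 hε, eventually_ge_atTop 0] with r hr hr0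
    rw [ENNReal.le_div_iff_mul_le (Or.inl (ENNReal.ofReal_pos.2 (hfpos r hr0)).ne')
      (Or.inl ENNReal.ofReal_ne_top), ← ENNReal.ofReal_mul' (hfpos r hr0).le]
    exact le_iInf₂ fun p hp => hr p hp.1 hp.2
  have hlim1 : Tendsto (fun ε : ℝ => ENNReal.ofReal (1 - ε)) (𝓝[>] 0) (𝓝 1) :=
    ((ENNReal.continuous_ofReal.comp (continuous_sub_left 1)).tendsto' 0 1
      (by simp)).mono_left nhdsWithin_le_nhds
  exact le_of_tendsto hlim1 (eventually_nhdsWithin_of_forall hε)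
end
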